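/- arXiv:2604.23176 — 8 statements merged into one kernel-verified Lean document; each statement's English description precedes it below -/
import Mathlib

section
/- Let Q be a probability measure on a measurable space 𝒳, let λ > 0, and let L : 𝒳 → ℝ be bounded and measurable. Then the supremum over all probability measures P on 𝒳 of ∫ L dP − λ·KL(P‖Q) (interpreted as −∞ when KL(P‖Q) = +∞) equals λ · log ∫ exp(L/λ) dQ. -/
open MeasureTheory Classical

noncomputable def KL {𝒳 : Type*} [MeasurableSpace 𝒳] (P Q : Measure 𝒳) : EReal :=
  if P ≪ Q ∧ Integrable (fun x => Real.log (P.rnDeriv Q x).toReal) P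
  then ((∫ x, Real.log (P.rnDeriv Q x).toReal ∂P : ℝ) : EReal)
  else ⊤

/-!
With `f = L / λ`, let `Q_f = e^f Q / ∫ e^f dQ` be the Gibbs measure (`Q.tilted f`). For every `P ≪ Q`,
`log ∫ e^f dQ - (∫ f dP - KL(P‖Q)) = KL(P‖Q_f) ≥ 0`, with equality at `P = Q_f`; multiplying by `λ`
gives the formula, the supremum being attained at `Q_f`.
-/

open Real InformationTheory

section GibbsVariational

variable {𝒳 : Type*} [MeasurableSpace 𝒳]

lemma KL_of_ac_of_integrable {P Q : Measure 𝒳} (hPQ : P ≪ Q) (h_int : Integrable (llr P Q) P) :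
    KL P Q = ((∫ x, llr P Q x ∂P : ℝ) : EReal) :=
  if_pos ⟨hPQ, h_int⟩

lemma KL_eq_top {P Q : Measure 𝒳} (h : ¬(P ≪ Q ∧ Integrable (llr P Q) P)) : KL P Q = ⊤ :=
  if_neg h

lemma integral_sub_integral_llr_le_log_integral_exp {P Q : Measure 𝒳} [IsProbabilityMeasure P]
    [SigmaFinite Q] {f : 𝒳 → ℝ} (hPQ : P ≪ Q) (h_int : Integrable (llr P Q) P)
    (hfP : Integrable f P) (hfQ : Integrable (fun x ↦ exp (f x)) Q) :
    ∫ x, f x ∂P - ∫ x, llr P Q x ∂P ≤ log (∫ x, exp (f x) ∂Q) := by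
  have : NeZero Q := ⟨fun hQ ↦ IsProbabilityMeasure.ne_zero P
    (Measure.absolutelyContinuous_zero_iff.mp (hQ ▸ hPQ))⟩
  have : IsProbabilityMeasure (Q.tilted f) := isProbabilityMeasure_tilted hfQ
  have h_gibbs := integral_llr_add_sub_measure_univ_nonneg
    (hPQ.trans (absolutelyContinuous_tilted hfQ)) (integrable_llr_tilted_right hPQ hfP h_int hfQ)
  rw [integral_llr_tilted_right hPQ hfP hfQ h_int] at h_gibbs
  simp only [probReal_univ, add_sub_cancel_right] at h_gibbs
  linarith

lemma llr_tilted_self_ae_eq {Q : Measure 𝒳} [SigmaFinite Q] {f : 𝒳 → ℝ}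
    (hfQ : Integrable (fun x ↦ exp (f x)) Q) :
    llr (Q.tilted f) Q =ᵐ[Q.tilted f] fun x ↦ f x - log (∫ x, exp (f x) ∂Q) :=
  (tilted_absolutelyContinuous Q f).ae_le (log_rnDeriv_tilted_left_self hfQ)

lemma integral_sub_integral_llr_tilted_self {Q : Measure 𝒳} [SigmaFinite Q] [NeZero Q]
    {f : 𝒳 → ℝ} (hfQ : Integrable (fun x ↦ exp (f x)) Q) (hf : Integrable f (Q.tilted f)) :
    ∫ x, f x ∂(Q.tilted f) - ∫ x, llr (Q.tilted f) Q x ∂(Q.tilted f)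
      = log (∫ x, exp (f x) ∂Q) := by
  have : IsProbabilityMeasure (Q.tilted f) := isProbabilityMeasure_tilted hfQ
  rw [integral_congr_ae (llr_tilted_self_ae_eq hfQ), integral_sub hf (integrable_const _),
    integral_const, probReal_univ, one_smul, sub_sub_cancel]

lemma integrable_llr_tilted_self {Q : Measure 𝒳} [SigmaFinite Q] [NeZero Q] {f : 𝒳 → ℝ}
    (hfQ : Integrable (fun x ↦ exp (f x)) Q) (hf : Integrable f (Q.tilted f)) :
    Integrable (llr (Q.tilted f) Q) (Q.tilted f) := by
  have : IsProbabilityMeasure (Q.tilted f) := isProbabilityMeasure_tilted hfQ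
  exact (integrable_congr (llr_tilted_self_ae_eq hfQ)).mpr (hf.sub (integrable_const _))

lemma integral_sub_mul_KL_le {P Q : Measure 𝒳} [IsProbabilityMeasure P] [SigmaFinite Q]
    {lam : ℝ} (hlam : 0 < lam) {L : 𝒳 → ℝ} (hLP : Integrable L P)
    (hLQ : Integrable (fun x ↦ exp (L x / lam)) Q) :
    ((∫ x, L x ∂P : ℝ) : EReal) - (lam : EReal) * KL P Q
      ≤ ((lam * log (∫ x, exp (L x / lam) ∂Q) : ℝ) : EReal) := by
  by_cases h : P ≪ Q ∧ Integrable (llr P Q) P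
  · rw [KL_of_ac_of_integrable h.1 h.2, ← EReal.coe_mul, ← EReal.coe_sub, EReal.coe_le_coe_iff]
    have h_gibbs := integral_sub_integral_llr_le_log_integral_exp h.1 h.2 (hLP.div_const lam) hLQ
    rw [integral_div] at h_gibbs
    calc ∫ x, L x ∂P - lam * ∫ x, llr P Q x ∂P
        = lam * ((∫ x, L x ∂P) / lam - ∫ x, llr P Q x ∂P) := by field_simp
      _ ≤ lam * log (∫ x, exp (L x / lam) ∂Q) := by gcongr
  · rw [KL_eq_top h, EReal.mul_top_of_pos (by exact_mod_cast hlam), EReal.sub_top]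
    exact bot_le

lemma integral_sub_mul_KL_tilted {Q : Measure 𝒳} [SigmaFinite Q] [NeZero Q] {lam : ℝ}
    (hlam : 0 < lam) {L : 𝒳 → ℝ} (hLQ : Integrable (fun x ↦ exp (L x / lam)) Q)
    (hL : Integrable L (Q.tilted (L · / lam))) :
    ((∫ x, L x ∂(Q.tilted (L · / lam)) : ℝ) : EReal)
        - (lam : EReal) * KL (Q.tilted (L · / lam)) Q
      = ((lam * log (∫ x, exp (L x / lam) ∂Q) : ℝ) : EReal) := by
  have hf : Integrable (L · / lam) (Q.tilted (L · / lam)) := hL.div_const lam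
  rw [KL_of_ac_of_integrable (tilted_absolutelyContinuous Q _) (integrable_llr_tilted_self hLQ hf),
    ← EReal.coe_mul, ← EReal.coe_sub, EReal.coe_eq_coe_iff,
    ← integral_sub_integral_llr_tilted_self hLQ hf, integral_div]
  field_simp

end GibbsVariational

/-- **Donsker–Varadhan / Gibbs variational formula (Proposition `Dupuis–Ellis`).**
For a probability measure `Q`, `λ > 0` and a bounded measurable `L`, the supremum over all
probability measures `P` of `∫ L dP − λ · KL(P‖Q)` (which is `−∞` when `KL(P‖Q) = +∞`,
by the `EReal` conventions) equals `λ · log ∫ exp(L/λ) dQ`. -/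
theorem multiplier_dual_representation
    {𝒳 : Type*} [MeasurableSpace 𝒳] (Q : Measure 𝒳) [IsProbabilityMeasure Q]
    (lam : ℝ) (hlam : 0 < lam)
    (L : 𝒳 → ℝ) (hLmeas : Measurable L) (hLbdd : ∃ C : ℝ, ∀ x, |L x| ≤ C) :
    (⨆ (P : Measure 𝒳) (_ : IsProbabilityMeasure P),
        ((∫ x, L x ∂P : ℝ) : EReal) - (lam : EReal) * KL P Q)
      = ((lam * Real.log (∫ x, Real.exp (L x / lam) ∂Q) : ℝ) : EReal) := by
  obtain ⟨C, hC⟩ := hLbdd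
  have hL : ∀ (P : Measure 𝒳) [IsFiniteMeasure P], Integrable L P := fun P _ ↦
    .of_bound hLmeas.aestronglyMeasurable C (ae_of_all _ hC)
  have hLQ : Integrable (fun x ↦ exp (L x / lam)) Q :=
    .of_bound (hLmeas.div_const lam).exp.aestronglyMeasurable (exp (C / lam)) <|
      ae_of_all _ fun x ↦ by
        rw [norm_of_nonneg (exp_pos _).le, exp_le_exp]
        exact div_le_div_of_nonneg_right (abs_le.mp (hC x)).2 hlam.le
  have : IsProbabilityMeasure (Q.tilted (L · / lam)) := isProbabilityMeasure_tilted hLQ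
  refine le_antisymm (iSup₂_le fun P _ ↦ integral_sub_mul_KL_le hlam (hL P) hLQ) ?_
  exact le_iSup₂_of_le (Q.tilted (L · / lam)) this
    (integral_sub_mul_KL_tilted hlam hLQ (hL _)).ge
end

section
/- Let S and T be standard Borel spaces, let Q be a probability measure on S × T with second-coordinate marginal Q_T, and let Q(dx, dy) = Q_{S|T}(dx | y) Q_T(dy) be its disintegration over the second coordinate. Let λ > 0 and let f : S × T → [0, ∞) be measurable. Then the supremum, over all probability measures P on S × T whose second-coordinate marginal equals Q_T, of ∫ f dP − λ·KL(P‖Q) (interpreted as −∞ when KL(P‖Q) = +∞ and ∫ f dP < ∞) equals λ ∫_T log( ∫_S exp(f(x,y)/λ) Q_{S|T}(dx | y) ) Q_T(dy), as an identity in [0, +∞]. -/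
open MeasureTheory Classical ProbabilityTheory

/-- Logarithm on `[1, +∞] ⊆ ℝ≥0∞`, valued in `[0, +∞]`. -/
noncomputable def nnlog (x : ENNReal) : ENNReal :=
  if x = ⊤ then ⊤ else ENNReal.ofReal (Real.log x.toReal)

/-! Put `g = f / λ` and `Z(y) = ∫ exp g(x, y) κ_y(dx) ≥ 1`. For `P` with second marginal `Q_T`,
`h(x, y) = g(x, y) - log Z(y)` satisfies `∫ e^h dQ = 1`, and integrating
`h - log (dP/dQ) ≤ e^(h - log (dP/dQ)) - 1` against `P` gives the Gibbs inequality
`∫ g dP ≤ ∫ log Z dQ_T + KL(P‖Q)`. Equality holds for the conditionally tilted measure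
`e^h · Q`, which again has second marginal `Q_T`. For unbounded `f` one tilts by the truncations
`min g n` instead: their partition functions increase to `Z`, and since `nnlog` is monotone and
continuous, the values at these tilts converge to the upper bound by monotone convergence. -/

open scoped ENNReal
open InformationTheory

lemma nnlog_eq_toENNReal_log (x : ℝ≥0∞) : nnlog x = (ENNReal.log x).toENNReal := by
  rcases eq_or_ne x ⊤ with rfl | hx
  · simp [nnlog]
  rcases eq_or_ne x 0 with rfl | hx₀
  · simp [nnlog]
  rw [nnlog, if_neg hx, ENNReal.log_pos_real hx₀ hx, EReal.real_coe_toENNReal]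

lemma monotone_nnlog : Monotone nnlog := fun x y hxy => by
  simp only [nnlog_eq_toENNReal_log]
  exact EReal.toENNReal_le_toENNReal (ENNReal.log_monotone hxy)

lemma continuous_nnlog : Continuous nnlog := by
  simp only [funext nnlog_eq_toENNReal_log]
  exact EReal.continuous_toENNReal.comp ENNReal.continuous_log

lemma measurable_nnlog : Measurable nnlog :=
  continuous_nnlog.measurable

lemma nnlog_eq_top_iff {x : ℝ≥0∞} : nnlog x = ⊤ ↔ x = ⊤ := by
  simp [nnlog_eq_toENNReal_log, EReal.toENNReal_eq_top_iff]

lemma toReal_nnlog {x : ℝ≥0∞} (hx : 1 ≤ x) (hx_top : x ≠ ⊤) :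
    (nnlog x).toReal = Real.log x.toReal := by
  rw [nnlog, if_neg hx_top, ENNReal.toReal_ofReal]
  exact Real.log_nonneg (by simpa using ENNReal.toReal_mono hx_top hx)

section LogLikelihoodRatio

variable {α : Type*} [MeasurableSpace α] {P Q : Measure α}

lemma klDiv_eq_ofReal_integral_llr [IsProbabilityMeasure P] [IsProbabilityMeasure Q]
    (hPQ : P ≪ Q) (hllr : Integrable (llr P Q) P) :
    klDiv P Q = ENNReal.ofReal (∫ x, llr P Q x ∂P) := by
  simp [klDiv_of_ac_of_integrable hPQ hllr]

lemma integral_llr_nonneg [IsProbabilityMeasure P] [IsProbabilityMeasure Q]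
    (hPQ : P ≪ Q) (hllr : Integrable (llr P Q) P) : 0 ≤ ∫ x, llr P Q x ∂P := by
  simpa using integral_llr_add_sub_measure_univ_nonneg hPQ hllr

lemma KL_eq_klDiv [IsProbabilityMeasure P] [IsProbabilityMeasure Q] :
    KL P Q = klDiv P Q := by
  by_cases h : P ≪ Q ∧ Integrable (llr P Q) P
  · rw [KL, ← llr_def, if_pos h, klDiv_eq_ofReal_integral_llr h.1 h.2, EReal.coe_ennreal_ofReal,
      max_eq_left (integral_llr_nonneg h.1 h.2)]
  · rw [KL, ← llr_def, if_neg h, klDiv_eq_top_iff.2 fun hPQ hllr => h ⟨hPQ, hllr⟩]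
    rfl

lemma coe_mul_KL [IsProbabilityMeasure P] [IsProbabilityMeasure Q] {lam : ℝ} (hlam : 0 ≤ lam) :
    (lam : EReal) * KL P Q = ((ENNReal.ofReal lam * klDiv P Q : ℝ≥0∞) : EReal) := by
  rw [KL_eq_klDiv, EReal.coe_ennreal_mul, EReal.coe_ennreal_ofReal, max_eq_left hlam]

lemma lintegral_exp_sub_llr_le [SigmaFinite P] [SigmaFinite Q] (hPQ : P ≪ Q) {h : α → ℝ}
    (hh : Measurable h) :
    ∫⁻ x, ENNReal.ofReal (Real.exp (h x - llr P Q x)) ∂P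
      ≤ ∫⁻ x, ENNReal.ofReal (Real.exp (h x)) ∂Q := by
  have hmeas : Measurable fun x => ENNReal.ofReal (Real.exp (h x - llr P Q x)) := by
    have := measurable_llr P Q
    fun_prop
  rw [← lintegral_rnDeriv_mul hPQ hmeas.aemeasurable]
  refine lintegral_mono_ae ?_
  filter_upwards [Measure.rnDeriv_lt_top P Q] with x hx_top
  rcases eq_or_ne (P.rnDeriv Q x) 0 with hx₀ | hx₀
  · simp [hx₀]
  have hpos : 0 < (P.rnDeriv Q x).toReal := ENNReal.toReal_pos hx₀ hx_top.ne
  rw [llr_def, Real.exp_sub, Real.exp_log hpos]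
  nth_rw 1 [← ENNReal.ofReal_toReal hx_top.ne]
  rw [← ENNReal.ofReal_mul hpos.le, mul_div_cancel₀ _ hpos.ne']

theorem integrable_and_integral_le_integral_llr [IsProbabilityMeasure P] [SigmaFinite Q]
    (hPQ : P ≪ Q) (hllr : Integrable (llr P Q) P) {h b : α → ℝ} (hh : Measurable h)
    (hexp : ∫⁻ x, ENNReal.ofReal (Real.exp (h x)) ∂Q ≤ 1)
    (hb : Integrable b P) (hbh : ∀ᵐ x ∂P, b x ≤ h x) :
    Integrable h P ∧ ∫ x, h x ∂P ≤ ∫ x, llr P Q x ∂P := by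
  set r := fun x => Real.exp (h x - llr P Q x)
  have hr_meas : Measurable r := by
    have := measurable_llr P Q
    fun_prop
  have hr_lintegral : ∫⁻ x, ENNReal.ofReal (r x) ∂P ≤ 1 :=
    (lintegral_exp_sub_llr_le hPQ hh).trans hexp
  have hr_nonneg : 0 ≤ᵐ[P] r := ae_of_all _ fun x => (Real.exp_pos _).le
  have hr : Integrable r P :=
    ⟨hr_meas.aestronglyMeasurable, (hasFiniteIntegral_iff_ofReal hr_nonneg).2
      (hr_lintegral.trans_lt ENNReal.one_lt_top)⟩
  have hr_integral : ∫ x, r x ∂P ≤ 1 := by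
    rw [integral_eq_lintegral_of_nonneg_ae hr_nonneg hr_meas.aestronglyMeasurable]
    exact ENNReal.toReal_le_of_le_ofReal zero_le_one (by simpa using hr_lintegral)
  have h_le : ∀ x, h x ≤ llr P Q x + (r x - 1) := fun x => by
    linarith [Real.add_one_le_exp (h x - llr P Q x)]
  have hr_sub : Integrable (fun x => r x - 1) P := hr.sub (integrable_const 1)
  have hu : Integrable (fun x => llr P Q x + (r x - 1)) P := hllr.add hr_sub
  have hh_int : Integrable h P :=
    integrable_of_le_of_le hh.aestronglyMeasurable hbh (ae_of_all _ h_le) hb hu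
  refine ⟨hh_int, ?_⟩
  calc ∫ x, h x ∂P ≤ ∫ x, llr P Q x + (r x - 1) ∂P := integral_mono hh_int hu h_le
    _ = ∫ x, llr P Q x ∂P + (∫ x, r x ∂P - 1) := by
      rw [integral_add hllr hr_sub, integral_sub hr (integrable_const 1)]
      simp
    _ ≤ ∫ x, llr P Q x ∂P := by linarith

lemma llr_withDensity_ofReal_exp [SigmaFinite Q] {h : α → ℝ} (hh : Measurable h) :
    llr (Q.withDensity fun x => ENNReal.ofReal (Real.exp (h x))) Q =ᵐ[Q] h := by
  filter_upwards [Measure.rnDeriv_withDensity Q (by fun_prop :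
    Measurable fun x => ENNReal.ofReal (Real.exp (h x)))] with x hx
  rw [llr_def]
  simp [hx, ENNReal.toReal_ofReal (Real.exp_pos _).le]

end LogLikelihoodRatio

section Disintegration

variable {S T : Type*} [MeasurableSpace S] [MeasurableSpace T] {Q : Measure (S × T)}
  {κ : Kernel T S}

def IsSndDisintegration (Q : Measure (S × T)) (κ : Kernel T S) : Prop :=
  ∀ A : Set (S × T), MeasurableSet A → Q A = ∫⁻ y, κ y {x | (x, y) ∈ A} ∂(Q.map Prod.snd)

lemma IsSndDisintegration.lintegral_eq [SFinite Q] [IsSFiniteKernel κ]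
    (hκ : IsSndDisintegration Q κ) {h : S × T → ℝ≥0∞} (hh : Measurable h) :
    ∫⁻ z, h z ∂Q = ∫⁻ y, ∫⁻ x, h (x, y) ∂κ y ∂(Q.map Prod.snd) := by
  have hQ : Q = ((Q.map Prod.snd) ⊗ₘ κ).map Prod.swap := by
    ext A hA
    rw [Measure.map_apply measurable_swap hA, Measure.compProd_apply (measurable_swap hA), hκ A hA]
    rfl
  conv_lhs => rw [hQ]
  rw [lintegral_map hh measurable_swap]
  exact Measure.lintegral_compProd (f := fun p => h p.swap) (hh.comp measurable_swap)

lemma IsSndDisintegration.map_snd_withDensity [SFinite Q] [IsSFiniteKernel κ]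
    (hκ : IsSndDisintegration Q κ) {w : S × T → ℝ≥0∞} (hw : Measurable w)
    (hw_one : ∀ᵐ y ∂(Q.map Prod.snd), ∫⁻ x, w (x, y) ∂κ y = 1) :
    (Q.withDensity w).map Prod.snd = Q.map Prod.snd := by
  ext B hB
  have hB' : MeasurableSet (Prod.snd ⁻¹' B : Set (S × T)) := measurable_snd hB
  rw [Measure.map_apply measurable_snd hB, withDensity_apply _ hB', ← lintegral_indicator hB',
    hκ.lintegral_eq (hw.indicator hB'), ← lintegral_indicator_one hB]
  refine lintegral_congr_ae ?_
  filter_upwards [hw_one] with y hy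
  by_cases hyB : y ∈ B <;> simp [Set.indicator, hyB, hy]

noncomputable def condPartition (κ : Kernel T S) (g : S × T → ℝ) (y : T) : ℝ≥0∞ :=
  ∫⁻ x, ENNReal.ofReal (Real.exp (g (x, y))) ∂κ y

-- `log Z(y)` with the junk value `0` where `Z(y) = ∞`
noncomputable def logCondPartition (κ : Kernel T S) (g : S × T → ℝ) (y : T) : ℝ :=
  (nnlog (condPartition κ g y)).toReal

variable {g : S × T → ℝ}

lemma measurable_condPartition [IsSFiniteKernel κ] (hg : Measurable g) :
    Measurable (condPartition κ g) :=
  Measurable.lintegral_kernel_prod_right'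
    (f := fun p : T × S => ENNReal.ofReal (Real.exp (g p.swap))) (by fun_prop)

lemma measurable_logCondPartition [IsSFiniteKernel κ] (hg : Measurable g) :
    Measurable (logCondPartition κ g) :=
  (measurable_nnlog.comp (measurable_condPartition hg)).ennreal_toReal

lemma condPartition_mono {g' : S × T → ℝ} (hgg' : ∀ z, g z ≤ g' z) (y : T) :
    condPartition κ g y ≤ condPartition κ g' y :=
  lintegral_mono fun _ => ENNReal.ofReal_le_ofReal (Real.exp_le_exp.2 (hgg' _))

lemma condPartition_eq_iSup_min (hg : Measurable g) (y : T) :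
    condPartition κ g y = ⨆ n : ℕ, condPartition κ (fun z => min (g z) n) y := by
  have hexp : ∀ a : ℝ,
      ENNReal.ofReal (Real.exp a) = ⨆ n : ℕ, ENNReal.ofReal (Real.exp (min a n)) :=
    fun a => le_antisymm (le_iSup_of_le ⌈a⌉₊ (by rw [min_eq_left (Nat.le_ceil a)]))
      (iSup_le fun n => ENNReal.ofReal_le_ofReal (Real.exp_le_exp.2 (min_le_left _ _)))
  simp_rw [condPartition, hexp (g (_, y))]
  refine lintegral_iSup (fun n => by fun_prop) fun n m hnm x => ?_
  exact ENNReal.ofReal_le_ofReal (Real.exp_le_exp.2 (min_le_min_left _ (Nat.cast_le.2 hnm)))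

lemma one_le_condPartition [IsMarkovKernel κ] (hg₀ : ∀ z, 0 ≤ g z) (y : T) :
    1 ≤ condPartition κ g y := by
  simpa [condPartition] using condPartition_mono (κ := κ) (g := 0) hg₀ y

lemma condPartition_le [IsMarkovKernel κ] {c : ℝ} (hgc : ∀ z, g z ≤ c) (y : T) :
    condPartition κ g y ≤ ENNReal.ofReal (Real.exp c) := by
  simpa [condPartition] using condPartition_mono (κ := κ) (g' := fun _ => c) hgc y

lemma condPartition_ne_top [IsMarkovKernel κ] {c : ℝ} (hgc : ∀ z, g z ≤ c) (y : T) :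
    condPartition κ g y ≠ ⊤ :=
  ne_top_of_le_ne_top ENNReal.ofReal_ne_top (condPartition_le hgc y)

lemma lintegral_exp_sub_logCondPartition_kernel [IsMarkovKernel κ] (hg₀ : ∀ z, 0 ≤ g z) {y : T}
    (hy : condPartition κ g y ≠ ⊤) :
    ∫⁻ x, ENNReal.ofReal (Real.exp (g (x, y) - logCondPartition κ g y)) ∂κ y = 1 := by
  have hZ := one_le_condPartition (κ := κ) hg₀ y
  have hpos : 0 < (condPartition κ g y).toReal :=
    ENNReal.toReal_pos (zero_lt_one.trans_le hZ).ne' hy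
  simp_rw [Real.exp_sub, div_eq_mul_inv, ENNReal.ofReal_mul (Real.exp_pos _).le]
  rw [lintegral_mul_const' _ _ ENNReal.ofReal_ne_top, logCondPartition, toReal_nnlog hZ hy,
    Real.exp_log hpos, ENNReal.ofReal_inv_of_pos hpos, ENNReal.ofReal_toReal hy]
  exact ENNReal.mul_inv_cancel (zero_lt_one.trans_le hZ).ne' hy

lemma lintegral_exp_sub_logCondPartition [IsProbabilityMeasure Q] [IsMarkovKernel κ]
    (hκ : IsSndDisintegration Q κ)
    (hg : Measurable g) (hg₀ : ∀ z, 0 ≤ g z)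
    (hZ : ∀ᵐ y ∂(Q.map Prod.snd), condPartition κ g y ≠ ⊤) :
    ∫⁻ z, ENNReal.ofReal (Real.exp (g z - logCondPartition κ g z.2)) ∂Q = 1 := by
  have := measurable_logCondPartition (κ := κ) hg
  rw [hκ.lintegral_eq (by fun_prop), lintegral_congr_ae (hZ.mono fun y hy => lintegral_exp_sub_logCondPartition_kernel hg₀ hy)]
  simp [Measure.map_apply measurable_snd MeasurableSet.univ]

section

variable {ν : Measure T}

lemma lintegral_nnlog_condPartition_ne_top [IsMarkovKernel κ] [IsFiniteMeasure ν] {c : ℝ}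
    (hgc : ∀ z, g z ≤ c) : ∫⁻ y, nnlog (condPartition κ g y) ∂ν ≠ ⊤ := by
  refine ne_top_of_le_ne_top ?_ (lintegral_mono fun y => monotone_nnlog (condPartition_le hgc y))
  simp [lintegral_const, nnlog_eq_top_iff, ENNReal.mul_eq_top]

variable [IsSFiniteKernel κ]

lemma ae_condPartition_ne_top (hg : Measurable g)
    (hfin : ∫⁻ y, nnlog (condPartition κ g y) ∂ν ≠ ⊤) :
    ∀ᵐ y ∂ν, condPartition κ g y ≠ ⊤ := by
  filter_upwards [ae_lt_top (measurable_nnlog.comp (measurable_condPartition hg)) hfin]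
    with y hy
  exact nnlog_eq_top_iff.not.1 hy.ne

lemma integrable_logCondPartition (hg : Measurable g)
    (hfin : ∫⁻ y, nnlog (condPartition κ g y) ∂ν ≠ ⊤) :
    Integrable (logCondPartition κ g) ν :=
  integrable_toReal_of_lintegral_ne_top
    (measurable_nnlog.comp (measurable_condPartition hg)).aemeasurable hfin

lemma ofReal_integral_logCondPartition (hg : Measurable g)
    (hfin : ∫⁻ y, nnlog (condPartition κ g y) ∂ν ≠ ⊤) :
    ENNReal.ofReal (∫ y, logCondPartition κ g y ∂ν) = ∫⁻ y, nnlog (condPartition κ g y) ∂ν := by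
  have hmeas : Measurable fun y => nnlog (condPartition κ g y) :=
    measurable_nnlog.comp (measurable_condPartition hg)
  unfold logCondPartition
  rw [integral_toReal hmeas.aemeasurable (ae_lt_top hmeas hfin), ENNReal.ofReal_toReal hfin]

variable {P : Measure (S × T)}

lemma integrable_logCondPartition_snd (hg : Measurable g) (hP : P.map Prod.snd = ν)
    (hfin : ∫⁻ y, nnlog (condPartition κ g y) ∂ν ≠ ⊤) :
    Integrable (fun z => logCondPartition κ g z.2) P := by
  have h := integrable_logCondPartition hg hfin
  rw [← hP] at h
  exact h.comp_measurable measurable_snd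

lemma integral_logCondPartition_snd (hg : Measurable g) (hP : P.map Prod.snd = ν) :
    ∫ z, logCondPartition κ g z.2 ∂P = ∫ y, logCondPartition κ g y ∂ν := by
  rw [← hP, integral_map measurable_snd.aemeasurable
    (measurable_logCondPartition hg).aestronglyMeasurable]

lemma lintegral_nnlog_condPartition_eq_iSup_min (hg : Measurable g) :
    ∫⁻ y, nnlog (condPartition κ g y) ∂ν
      = ⨆ n : ℕ, ∫⁻ y, nnlog (condPartition κ (fun z => min (g z) n) y) ∂ν := by
  have hmono : ∀ y, Monotone fun n : ℕ => condPartition κ (fun z => min (g z) n) y :=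
    fun y n m hnm => condPartition_mono (fun z => min_le_min_left _ (Nat.cast_le.2 hnm)) y
  have hmeas : ∀ n : ℕ, Measurable fun y => nnlog (condPartition κ (fun z => min (g z) n) y) :=
    fun n => measurable_nnlog.comp (measurable_condPartition (by fun_prop))
  rw [← lintegral_iSup hmeas fun n m hnm y => monotone_nnlog (hmono y hnm)]
  refine lintegral_congr fun y => ?_
  rw [condPartition_eq_iSup_min hg,
    monotone_nnlog.map_ciSup_of_continuousAt continuous_nnlog.continuousAt]

end

theorem lintegral_le_lintegral_nnlog_condPartition_add_klDiv [IsProbabilityMeasure Q]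
    [IsMarkovKernel κ]
    (hκ : IsSndDisintegration Q κ)
    (hg : Measurable g) (hg₀ : ∀ z, 0 ≤ g z) {P : Measure (S × T)} [IsProbabilityMeasure P]
    (hPQ_snd : P.map Prod.snd = Q.map Prod.snd) :
    ∫⁻ z, ENNReal.ofReal (g z) ∂P
      ≤ ∫⁻ y, nnlog (condPartition κ g y) ∂(Q.map Prod.snd) + klDiv P Q := by
  by_cases hfin : ∫⁻ y, nnlog (condPartition κ g y) ∂(Q.map Prod.snd) ≠ ⊤ ∧ klDiv P Q ≠ ⊤
  swap
  · rcases not_and_or.1 hfin with h | h <;> simp [not_ne_iff.1 h]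
  obtain ⟨hN, hK⟩ := hfin
  obtain ⟨hPQ, hllr⟩ := klDiv_ne_top_iff.1 hK
  set ℓ := logCondPartition κ g
  have hℓP : Integrable (fun z => ℓ z.2) P := integrable_logCondPartition_snd hg hPQ_snd hN
  have hℓ₀ : 0 ≤ ∫ y, ℓ y ∂(Q.map Prod.snd) := integral_nonneg fun _ => ENNReal.toReal_nonneg
  obtain ⟨hint, hle⟩ := integrable_and_integral_le_integral_llr hPQ hllr
    (h := fun z => g z - ℓ z.2) (b := fun z => -ℓ z.2)
    (by have := measurable_logCondPartition (κ := κ) hg; fun_prop)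
    (lintegral_exp_sub_logCondPartition hκ hg hg₀ (ae_condPartition_ne_top hg hN)).le hℓP.neg
    (ae_of_all _ fun z => by linarith [hg₀ z])
  have hgP : Integrable g P :=
    (hint.add hℓP).congr (ae_of_all _ fun z => sub_add_cancel (g z) (ℓ z.2))
  have hsplit : ∫ z, g z ∂P = ∫ z, g z - ℓ z.2 ∂P + ∫ y, ℓ y ∂(Q.map Prod.snd) := by
    rw [integral_sub hgP hℓP, integral_logCondPartition_snd hg hPQ_snd]
    ring
  rw [← ofReal_integral_eq_lintegral_ofReal hgP (ae_of_all _ hg₀),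
    ← ofReal_integral_logCondPartition hg hN, klDiv_eq_ofReal_integral_llr hPQ hllr,
    ← ENNReal.ofReal_add hℓ₀ (integral_llr_nonneg hPQ hllr)]
  exact ENNReal.ofReal_le_ofReal (by linarith)

noncomputable def condTilt (Q : Measure (S × T)) (κ : Kernel T S) (g : S × T → ℝ) :
    Measure (S × T) :=
  Q.withDensity fun z => ENNReal.ofReal (Real.exp (g z - logCondPartition κ g z.2))

lemma map_snd_condTilt [IsProbabilityMeasure Q] [IsMarkovKernel κ]
    (hκ : IsSndDisintegration Q κ)
    (hg : Measurable g) (hg₀ : ∀ z, 0 ≤ g z)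
    (hZ : ∀ᵐ y ∂(Q.map Prod.snd), condPartition κ g y ≠ ⊤) :
    (condTilt Q κ g).map Prod.snd = Q.map Prod.snd :=
  hκ.map_snd_withDensity (by have := measurable_logCondPartition (κ := κ) hg; fun_prop)
    (hZ.mono fun _ hy => lintegral_exp_sub_logCondPartition_kernel hg₀ hy)

lemma isProbabilityMeasure_condTilt [IsProbabilityMeasure Q] [IsMarkovKernel κ]
    (hκ : IsSndDisintegration Q κ)
    (hg : Measurable g) (hg₀ : ∀ z, 0 ≤ g z)
    (hZ : ∀ᵐ y ∂(Q.map Prod.snd), condPartition κ g y ≠ ⊤) :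
    IsProbabilityMeasure (condTilt Q κ g) :=
  ⟨by rw [condTilt, withDensity_apply _ MeasurableSet.univ, Measure.restrict_univ,
    lintegral_exp_sub_logCondPartition hκ hg hg₀ hZ]⟩

lemma llr_condTilt [SigmaFinite Q] [IsSFiniteKernel κ] (hg : Measurable g) :
    llr (condTilt Q κ g) Q =ᵐ[condTilt Q κ g] fun z => g z - logCondPartition κ g z.2 :=
  (withDensity_absolutelyContinuous _ _).ae_le
    (llr_withDensity_ofReal_exp (by have := measurable_logCondPartition (κ := κ) hg; fun_prop))

theorem lintegral_nnlog_condPartition_add_klDiv_condTilt [IsProbabilityMeasure Q]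
    [IsMarkovKernel κ]
    (hκ : IsSndDisintegration Q κ)
    (hg : Measurable g) (hg₀ : ∀ z, 0 ≤ g z) {c : ℝ} (hgc : ∀ z, g z ≤ c) :
    ∫⁻ y, nnlog (condPartition κ g y) ∂(Q.map Prod.snd) + klDiv (condTilt Q κ g) Q
      = ∫⁻ z, ENNReal.ofReal (g z) ∂(condTilt Q κ g) := by
  set P := condTilt Q κ g
  set ℓ := logCondPartition κ g
  have hZ : ∀ᵐ y ∂(Q.map Prod.snd), condPartition κ g y ≠ ⊤ :=
    ae_of_all _ (condPartition_ne_top hgc)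
  have := isProbabilityMeasure_condTilt hκ hg hg₀ hZ
  have hPν := map_snd_condTilt hκ hg hg₀ hZ
  have hN := lintegral_nnlog_condPartition_ne_top (κ := κ) (ν := Q.map Prod.snd) hgc
  have hPQ : P ≪ Q := withDensity_absolutelyContinuous _ _
  have hgP : Integrable g P := Integrable.of_bound hg.aestronglyMeasurable c
    (ae_of_all _ fun z => by rw [Real.norm_of_nonneg (hg₀ z)]; exact hgc z)
  have hℓP : Integrable (fun z => ℓ z.2) P := integrable_logCondPartition_snd hg hPν hN
  have hℓ₀ : 0 ≤ ∫ y, ℓ y ∂(Q.map Prod.snd) := integral_nonneg fun _ => ENNReal.toReal_nonneg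
  have hllr := llr_condTilt (Q := Q) (κ := κ) hg
  have hllr_int : Integrable (llr P Q) P := (integrable_congr hllr).2 (hgP.sub hℓP)
  have hllr_eq : ∫ z, llr P Q z ∂P = ∫ z, g z ∂P - ∫ y, ℓ y ∂(Q.map Prod.snd) := by
    rw [integral_congr_ae hllr, integral_sub hgP hℓP, integral_logCondPartition_snd hg hPν]
  rw [klDiv_eq_ofReal_integral_llr hPQ hllr_int, ← ofReal_integral_logCondPartition hg hN,
    ← ENNReal.ofReal_add hℓ₀ (integral_llr_nonneg hPQ hllr_int), hllr_eq, add_sub_cancel,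
    ofReal_integral_eq_lintegral_ofReal hgP (ae_of_all _ hg₀)]

theorem coe_lintegral_sub_mul_KL_le [IsProbabilityMeasure Q] [IsMarkovKernel κ]
    (hκ : IsSndDisintegration Q κ)
    {lam : ℝ} (hlam : 0 < lam) {f : S × T → ℝ} (hf : Measurable f) (hf₀ : ∀ z, 0 ≤ f z)
    {P : Measure (S × T)} [IsProbabilityMeasure P] (hPQ_snd : P.map Prod.snd = Q.map Prod.snd) :
    ((∫⁻ z, ENNReal.ofReal (f z) ∂P : ℝ≥0∞) : EReal) - (lam : EReal) * KL P Q
      ≤ ((ENNReal.ofReal lam *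
          ∫⁻ y, nnlog (condPartition κ (fun z => f z / lam) y) ∂(Q.map Prod.snd) : ℝ≥0∞) :
            EReal) := by
  have hscale : ∀ z, ENNReal.ofReal (f z) = ENNReal.ofReal lam * ENNReal.ofReal (f z / lam) :=
    fun z => by rw [← ENNReal.ofReal_mul hlam.le, mul_div_cancel₀ _ hlam.ne']
  rw [coe_mul_KL hlam.le, EReal.sub_le_iff_le_add (.inl (EReal.coe_ennreal_ne_bot _))
      (.inr (EReal.coe_ennreal_ne_bot _)), ← EReal.coe_ennreal_add,
    EReal.coe_ennreal_le_coe_ennreal_iff, ← mul_add, lintegral_congr hscale,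
    lintegral_const_mul' _ _ ENNReal.ofReal_ne_top]
  gcongr
  exact lintegral_le_lintegral_nnlog_condPartition_add_klDiv hκ (hf.div_const lam)
    (fun z => div_nonneg (hf₀ z) hlam.le) hPQ_snd

theorem coe_mul_lintegral_nnlog_le_lintegral_sub_mul_KL_condTilt [IsProbabilityMeasure Q]
    [IsMarkovKernel κ]
    (hκ : IsSndDisintegration Q κ)
    {lam : ℝ} (hlam : 0 < lam) {f : S × T → ℝ} (hg : Measurable g) (hg₀ : ∀ z, 0 ≤ g z)
    {c : ℝ} (hgc : ∀ z, g z ≤ c) (hgf : ∀ z, lam * g z ≤ f z) :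
    ((ENNReal.ofReal lam * ∫⁻ y, nnlog (condPartition κ g y) ∂(Q.map Prod.snd) : ℝ≥0∞) : EReal)
      ≤ ((∫⁻ z, ENNReal.ofReal (f z) ∂(condTilt Q κ g) : ℝ≥0∞) : EReal)
          - (lam : EReal) * KL (condTilt Q κ g) Q := by
  have := isProbabilityMeasure_condTilt hκ hg hg₀ (ae_of_all _ (condPartition_ne_top hgc))
  have heq := lintegral_nnlog_condPartition_add_klDiv_condTilt hκ hg hg₀ hgc
  have hK : klDiv (condTilt Q κ g) Q ≠ ⊤ := by
    refine ne_top_of_le_ne_top ?_ (heq ▸ le_add_self)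
    exact ne_top_of_le_ne_top (by simp : ∫⁻ _, ENNReal.ofReal c ∂(condTilt Q κ g) ≠ ⊤)
      (lintegral_mono fun z => ENNReal.ofReal_le_ofReal (hgc z))
  rw [coe_mul_KL hlam.le, EReal.le_sub_iff_add_le (.inl (EReal.coe_ennreal_ne_bot _))
      (.inl (EReal.coe_ennreal_eq_top_iff.not.2 (ENNReal.mul_ne_top ENNReal.ofReal_ne_top hK))),
    ← EReal.coe_ennreal_add, EReal.coe_ennreal_le_coe_ennreal_iff, ← mul_add, heq,
    ← lintegral_const_mul' _ _ ENNReal.ofReal_ne_top]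
  exact lintegral_mono fun z => by
    rw [← ENNReal.ofReal_mul hlam.le]
    exact ENNReal.ofReal_le_ofReal (hgf z)

end Disintegration

theorem conditional_multiplier_duality_general
    {S T : Type*} [MeasurableSpace S]
    [MeasurableSpace T]
    (Q : Measure (S × T)) [IsProbabilityMeasure Q]
    (κ : Kernel T S) [IsMarkovKernel κ]
    (hκ : ∀ A : Set (S × T), MeasurableSet A →
      Q A = ∫⁻ y, κ y {x | (x, y) ∈ A} ∂(Q.map Prod.snd))
    (lam : ℝ) (hlam : 0 < lam)
    (f : S × T → ℝ) (hfmeas : Measurable f) (hf0 : ∀ z, 0 ≤ f z) :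
    sSup {v : EReal | ∃ P : Measure (S × T), IsProbabilityMeasure P ∧
        P.map Prod.snd = Q.map Prod.snd ∧
        v = ((∫⁻ z, ENNReal.ofReal (f z) ∂P : ENNReal) : EReal)
              - (lam : EReal) * KL P Q}
      = ((ENNReal.ofReal lam *
          ∫⁻ y, nnlog (∫⁻ x, ENNReal.ofReal (Real.exp (f (x, y) / lam)) ∂(κ y))
            ∂(Q.map Prod.snd) : ENNReal) : EReal) := by
  set g : ℕ → S × T → ℝ := fun n z => min (f z / lam) n
  have hg : ∀ n, Measurable (g n) := fun n => by fun_prop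
  have hg₀ : ∀ n z, 0 ≤ g n z := fun n z => le_min (div_nonneg (hf0 z) hlam.le) n.cast_nonneg
  have hg_le : ∀ n z, g n z ≤ n := fun n z => min_le_right _ _
  have hgf : ∀ n z, lam * g n z ≤ f z := fun n z =>
    (mul_le_mul_of_nonneg_left (min_le_left _ _) hlam.le).trans_eq (mul_div_cancel₀ _ hlam.ne')
  have hZ : ∀ n, ∀ᵐ y ∂(Q.map Prod.snd), condPartition κ (g n) y ≠ ⊤ := fun n =>
    ae_of_all _ (condPartition_ne_top (hg_le n))
  apply le_antisymm
  · refine sSup_le ?_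
    rintro _ ⟨P, hP, hPQ_snd, rfl⟩
    exact coe_lintegral_sub_mul_KL_le hκ hlam hfmeas hf0 hPQ_snd
  · change ((ENNReal.ofReal lam * ∫⁻ y, nnlog (condPartition κ (fun z => f z / lam) y)
      ∂(Q.map Prod.snd) : ENNReal) : EReal) ≤ _
    rw [lintegral_nnlog_condPartition_eq_iSup_min (hfmeas.div_const lam), ENNReal.mul_iSup,
      EReal.coe_ennreal_strictMono.monotone.map_ciSup_of_continuousAt
        continuous_coe_ennreal_ereal.continuousAt]
    refine iSup_le fun n => le_sSup_of_le ⟨condTilt Q κ (g n), ?_, ?_, rfl⟩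
      (coe_mul_lintegral_nnlog_le_lintegral_sub_mul_KL_condTilt hκ hlam (hg n) (hg₀ n) (hg_le n)
        (hgf n))
    · exact isProbabilityMeasure_condTilt hκ (hg n) (hg₀ n) (hZ n)
    · exact map_snd_condTilt hκ (hg n) (hg₀ n) (hZ n)

/-- **Conditional multiplier duality with a fixed marginal.** Let `Q` be a probability measure
on `S × T` with second-coordinate marginal `Q_T` and disintegration kernel `κ` over the second
coordinate. For `λ > 0` and measurable `f ≥ 0`, the supremum over probability measures `P` on
`S × T` with second marginal `Q_T` of `∫ f dP − λ KL(P‖Q)` (which is `−∞` when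
`KL(P‖Q) = +∞` and the loss integral is finite, by the `EReal` conventions) equals
`λ ∫_T log (∫_S exp(f(x,y)/λ) κ(y)(dx)) Q_T(dy)`, as an identity in `[0, +∞]`. -/
theorem conditional_multiplier_duality
    {S T : Type*} [MeasurableSpace S] [StandardBorelSpace S]
    [MeasurableSpace T] [StandardBorelSpace T]
    (Q : Measure (S × T)) [IsProbabilityMeasure Q]
    (κ : Kernel T S) [IsMarkovKernel κ]
    (hκ : ∀ A : Set (S × T), MeasurableSet A →
      Q A = ∫⁻ y, κ y {x | (x, y) ∈ A} ∂(Q.map Prod.snd))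
    (lam : ℝ) (hlam : 0 < lam)
    (f : S × T → ℝ) (hfmeas : Measurable f) (hf0 : ∀ z, 0 ≤ f z) :
    sSup {v : EReal | ∃ P : Measure (S × T), IsProbabilityMeasure P ∧
        P.map Prod.snd = Q.map Prod.snd ∧
        v = ((∫⁻ z, ENNReal.ofReal (f z) ∂P : ENNReal) : EReal)
              - (lam : EReal) * KL P Q}
      = ((ENNReal.ofReal lam *
          ∫⁻ y, nnlog (∫⁻ x, ENNReal.ofReal (Real.exp (f (x, y) / lam)) ∂(κ y))
            ∂(Q.map Prod.snd) : ENNReal) : EReal) :=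
  conditional_multiplier_duality_general Q κ hκ lam hlam f hfmeas hf0
end

section
/- Let (Ω, ℱ, μ) be a probability space, 𝔪 ⊆ ℱ a sub-σ-algebra, λ > 0, ℓ : ℝ^d → [0, ∞) convex, and φ : Ω → ℝ^J measurable. Assume that exp(ℓ(Γφ)/λ) is μ-integrable for every Γ ∈ ℝ^{d×J}. Then the map Γ ↦ ∫ log( 𝔼_μ[ exp(ℓ(Γφ)/λ) | 𝔪 ] ) dμ, from ℝ^{d×J} to [0, +∞], is convex. (Since exp(ℓ(Γφ)/λ) ≥ 1, the conditional expectation is almost everywhere ≥ 1, so the integrand is nonnegative and the integral is well defined in [0, +∞].) -/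
open MeasureTheory

lemma key_lintegral_convex
    {Ω : Type*} {mΩ : MeasurableSpace Ω} (μ : Measure Ω) [IsProbabilityMeasure μ]
    (m : MeasurableSpace Ω) (hm : m ≤ mΩ) (t : ℝ) (ht : 0 ≤ t) (ht1 : t ≤ 1)
    (X Y Z : Ω → ℝ)
    (hX1 : ∀ ω, 1 ≤ X ω) (hY1 : ∀ ω, 1 ≤ Y ω)
    (hXi : Integrable X μ) (hYi : Integrable Y μ) (hZi : Integrable Z μ)
    (hZle : ∀ ω, Z ω ≤ X ω ^ t * Y ω ^ (1 - t)) (hZ1 : ∀ ω, 1 ≤ Z ω) :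
    ∫⁻ ω, ENNReal.ofReal (Real.log ((μ[Z|m]) ω)) ∂μ
      ≤ ENNReal.ofReal t * ∫⁻ ω, ENNReal.ofReal (Real.log ((μ[X|m]) ω)) ∂μ
        + ENNReal.ofReal (1 - t) * ∫⁻ ω, ENNReal.ofReal (Real.log ((μ[Y|m]) ω)) ∂μ := by
  set c := μ[X|m] with hc
  set dd := μ[Y|m] with hdd
  set e := μ[Z|m] with he
  have ht1' : (0:ℝ) ≤ 1 - t := by linarith
  -- a.e. lower bounds on the conditional expectations
  have hcond_one : ∀ (W : Ω → ℝ), Integrable W μ → (∀ ω, 1 ≤ W ω) →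
      ∀ᵐ ω ∂μ, 1 ≤ (μ[W|m]) ω := by
    intro W hWi hW1
    have h := condExp_mono (μ := μ) (m := m) (integrable_const (1:ℝ)) hWi
      (Filter.Eventually.of_forall hW1)
    rw [condExp_const hm (1:ℝ)] at h
    exact h
  have hc1 : ∀ᵐ ω ∂μ, 1 ≤ c ω := hcond_one X hXi hX1
  have hd1 : ∀ᵐ ω ∂μ, 1 ≤ dd ω := hcond_one Y hYi hY1
  have he1 : ∀ᵐ ω ∂μ, 1 ≤ e ω := hcond_one Z hZi hZ1
  -- measurability
  have hcm : StronglyMeasurable[m] c := stronglyMeasurable_condExp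
  have hdm : StronglyMeasurable[m] dd := stronglyMeasurable_condExp
  -- the weight function
  set f : Ω → ℝ := fun ω => Real.exp (-(t * Real.log (c ω) + (1 - t) * Real.log (dd ω)))
    with hf
  have hfm : StronglyMeasurable[m] f :=
    Measurable.stronglyMeasurable
      ((((hcm.measurable.log.const_mul t).add
        (hdm.measurable.log.const_mul (1 - t))).neg).exp)
  have hf_pos : ∀ ω, 0 < f ω := fun ω => Real.exp_pos _
  -- f = (c^t * d^(1-t))⁻¹ whenever c, d ≥ 1
  have hf_eq : ∀ ω, 1 ≤ c ω → 1 ≤ dd ω →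
      f ω = (c ω ^ t * dd ω ^ (1 - t))⁻¹ := by
    intro ω hcω hdω
    have hc0 : 0 < c ω := lt_of_lt_of_le one_pos hcω
    have hd0 : 0 < dd ω := lt_of_lt_of_le one_pos hdω
    simp only [hf]
    rw [Real.exp_neg, Real.exp_add, mul_comm t, mul_comm (1 - t),
      Real.exp_mul, Real.exp_mul, Real.exp_log hc0, Real.exp_log hd0]
  have hf_le_one : ∀ ω, 1 ≤ c ω → 1 ≤ dd ω → f ω ≤ 1 := by
    intro ω hcω hdω
    rw [hf_eq ω hcω hdω]
    have h1 : 1 ≤ c ω ^ t := Real.one_le_rpow hcω ht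
    have h2 : 1 ≤ dd ω ^ (1 - t) := Real.one_le_rpow hdω ht1'
    have h3 : 1 ≤ c ω ^ t * dd ω ^ (1 - t) := by nlinarith
    exact inv_le_one_of_one_le₀ h3
  -- the inverse weights
  set g₁ : Ω → ℝ := fun ω => (c ω)⁻¹ with hg₁
  set g₂ : Ω → ℝ := fun ω => (dd ω)⁻¹ with hg₂
  have hg₁m : StronglyMeasurable[m] g₁ := Measurable.stronglyMeasurable hcm.measurable.inv
  have hg₂m : StronglyMeasurable[m] g₂ := Measurable.stronglyMeasurable hdm.measurable.inv
  -- integrabilities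
  have hfZ : Integrable (f * Z) μ := by
    refine hZi.mono' (((hfm.mono hm).aestronglyMeasurable).mul hZi.1) ?_
    filter_upwards [hc1, hd1] with ω hcω hdω
    have h01 : 0 < Z ω := lt_of_lt_of_le one_pos (hZ1 ω)
    have := hf_le_one ω hcω hdω
    rw [Pi.mul_apply, Real.norm_eq_abs, abs_mul, abs_of_pos (hf_pos ω), abs_of_pos h01]
    nlinarith [hf_pos ω]
  have hg₁X : Integrable (g₁ * X) μ := by
    refine hXi.mono' (((hg₁m.mono hm).aestronglyMeasurable).mul hXi.1) ?_
    filter_upwards [hc1] with ω hcω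
    have h01 : 0 < X ω := lt_of_lt_of_le one_pos (hX1 ω)
    have hc0 : 0 < c ω := lt_of_lt_of_le one_pos hcω
    have : (c ω)⁻¹ ≤ 1 := inv_le_one_of_one_le₀ hcω
    simp only [Pi.mul_apply, hg₁, Real.norm_eq_abs, abs_mul,
      abs_of_pos (inv_pos.mpr hc0), abs_of_pos h01]
    nlinarith [inv_pos.mpr hc0]
  have hg₂Y : Integrable (g₂ * Y) μ := by
    refine hYi.mono' (((hg₂m.mono hm).aestronglyMeasurable).mul hYi.1) ?_
    filter_upwards [hd1] with ω hdω
    have h01 : 0 < Y ω := lt_of_lt_of_le one_pos (hY1 ω)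
    have hd0 : 0 < dd ω := lt_of_lt_of_le one_pos hdω
    have : (dd ω)⁻¹ ≤ 1 := inv_le_one_of_one_le₀ hdω
    simp only [Pi.mul_apply, hg₂, Real.norm_eq_abs, abs_mul,
      abs_of_pos (inv_pos.mpr hd0), abs_of_pos h01]
    nlinarith [inv_pos.mpr hd0]
  -- pull-out properties
  have hpullZ : μ[f * Z|m] =ᵐ[μ] f * e := condExp_mul_of_stronglyMeasurable_left hfm hfZ hZi
  have hpullX : μ[g₁ * X|m] =ᵐ[μ] g₁ * c := condExp_mul_of_stronglyMeasurable_left hg₁m hg₁X hXi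
  have hpullY : μ[g₂ * Y|m] =ᵐ[μ] g₂ * dd := condExp_mul_of_stronglyMeasurable_left hg₂m hg₂Y hYi
  -- pointwise inequality
  have hpt : f * Z ≤ᵐ[μ] t • (g₁ * X) + (1 - t) • (g₂ * Y) := by
    filter_upwards [hc1, hd1] with ω hcω hdω
    have hc0 : 0 < c ω := lt_of_lt_of_le one_pos hcω
    have hd0 : 0 < dd ω := lt_of_lt_of_le one_pos hdω
    have hX0 : 0 < X ω := lt_of_lt_of_le one_pos (hX1 ω)
    have hY0 : 0 < Y ω := lt_of_lt_of_le one_pos (hY1 ω)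
    have hp1 : 0 < c ω ^ t := Real.rpow_pos_of_pos hc0 t
    have hp2 : 0 < dd ω ^ (1 - t) := Real.rpow_pos_of_pos hd0 (1 - t)
    have key := Real.geom_mean_le_arith_mean2_weighted ht ht1'
      (div_nonneg hX0.le hc0.le) (div_nonneg hY0.le hd0.le) (by ring)
    simp only [Pi.add_apply, Pi.smul_apply, Pi.mul_apply, smul_eq_mul]
    calc f ω * Z ω ≤ f ω * (X ω ^ t * Y ω ^ (1 - t)) :=
          mul_le_mul_of_nonneg_left (hZle ω) (hf_pos ω).le
      _ = (X ω / c ω) ^ t * (Y ω / dd ω) ^ (1 - t) := by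
          rw [hf_eq ω hcω hdω, Real.div_rpow hX0.le hc0.le, Real.div_rpow hY0.le hd0.le]
          field_simp
      _ ≤ t * (X ω / c ω) + (1 - t) * (Y ω / dd ω) := key
      _ = t * ((c ω)⁻¹ * X ω) + (1 - t) * ((dd ω)⁻¹ * Y ω) := by
          rw [div_eq_inv_mul, div_eq_inv_mul]
  -- conditional expectation of the RHS
  have hRint₁ : Integrable (t • (g₁ * X)) μ := hg₁X.smul t
  have hRint₂ : Integrable ((1 - t) • (g₂ * Y)) μ := hg₂Y.smul (1 - t)
  have hsum : μ[t • (g₁ * X) + (1 - t) • (g₂ * Y)|m]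
      =ᵐ[μ] t • (g₁ * c) + (1 - t) • (g₂ * dd) := by
    refine (condExp_add hRint₁ hRint₂ m).trans ?_
    have h1 : μ[t • (g₁ * X)|m] =ᵐ[μ] t • (g₁ * c) := by
      refine (condExp_smul (μ := μ) (m := m) t (g₁ * X)).trans ?_
      filter_upwards [hpullX] with ω h
      simp only [Pi.smul_apply, h]
    have h2 : μ[(1 - t) • (g₂ * Y)|m] =ᵐ[μ] (1 - t) • (g₂ * dd) := by
      refine (condExp_smul (μ := μ) (m := m) (1 - t) (g₂ * Y)).trans ?_
      filter_upwards [hpullY] with ω h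
      simp only [Pi.smul_apply, h]
    exact h1.add h2
  have hmono := condExp_mono (m := m) hfZ (hRint₁.add hRint₂) hpt
  -- conclude f * e ≤ 1 a.e.
  have hfe : ∀ᵐ ω ∂μ, f ω * e ω ≤ 1 := by
    filter_upwards [hpullZ, hmono, hsum, hc1, hd1] with ω h1 h2 h3 hcω hdω
    have hc0 : 0 < c ω := lt_of_lt_of_le one_pos hcω
    have hd0 : 0 < dd ω := lt_of_lt_of_le one_pos hdω
    have h4 := h2.trans (le_of_eq h3)
    rw [h1] at h4
    simp only [Pi.add_apply, Pi.smul_apply, Pi.mul_apply, smul_eq_mul] at h4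
    rwa [inv_mul_cancel₀ hc0.ne', inv_mul_cancel₀ hd0.ne', mul_one, mul_one,
      add_sub_cancel] at h4
  -- a.e. log inequality at the ENNReal level
  have hlog : ∀ᵐ ω ∂μ, ENNReal.ofReal (Real.log (e ω))
      ≤ ENNReal.ofReal t * ENNReal.ofReal (Real.log (c ω))
        + ENNReal.ofReal (1 - t) * ENNReal.ofReal (Real.log (dd ω)) := by
    filter_upwards [hfe, hc1, hd1, he1] with ω h1 hcω hdω heω
    have hc0 : 0 < c ω := lt_of_lt_of_le one_pos hcω
    have hd0 : 0 < dd ω := lt_of_lt_of_le one_pos hdω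
    have he0 : 0 < e ω := lt_of_lt_of_le one_pos heω
    have hp1 : 0 < c ω ^ t := Real.rpow_pos_of_pos hc0 t
    have hp2 : 0 < dd ω ^ (1 - t) := Real.rpow_pos_of_pos hd0 (1 - t)
    have hp : 0 < c ω ^ t * dd ω ^ (1 - t) := mul_pos hp1 hp2
    have heub : e ω ≤ c ω ^ t * dd ω ^ (1 - t) := by
      rw [hf_eq ω hcω hdω] at h1
      calc e ω = (c ω ^ t * dd ω ^ (1 - t)) * ((c ω ^ t * dd ω ^ (1 - t))⁻¹ * e ω) := by
            rw [← mul_assoc, mul_inv_cancel₀ hp.ne', one_mul]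
        _ ≤ (c ω ^ t * dd ω ^ (1 - t)) * 1 := mul_le_mul_of_nonneg_left h1 hp.le
        _ = c ω ^ t * dd ω ^ (1 - t) := mul_one _
    have hloglog : Real.log (e ω) ≤ t * Real.log (c ω) + (1 - t) * Real.log (dd ω) := by
      calc Real.log (e ω) ≤ Real.log (c ω ^ t * dd ω ^ (1 - t)) := Real.log_le_log he0 heub
        _ = t * Real.log (c ω) + (1 - t) * Real.log (dd ω) := by
            rw [Real.log_mul hp1.ne' hp2.ne', Real.log_rpow hc0, Real.log_rpow hd0]
    calc ENNReal.ofReal (Real.log (e ω))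
        ≤ ENNReal.ofReal (t * Real.log (c ω) + (1 - t) * Real.log (dd ω)) :=
          ENNReal.ofReal_le_ofReal hloglog
      _ ≤ ENNReal.ofReal (t * Real.log (c ω)) + ENNReal.ofReal ((1 - t) * Real.log (dd ω)) :=
          ENNReal.ofReal_add_le
      _ = ENNReal.ofReal t * ENNReal.ofReal (Real.log (c ω))
          + ENNReal.ofReal (1 - t) * ENNReal.ofReal (Real.log (dd ω)) := by
          rw [ENNReal.ofReal_mul ht, ENNReal.ofReal_mul ht1']
  -- finish with the lintegral
  have hmc : @Measurable Ω ENNReal mΩ _ fun ω => ENNReal.ofReal (Real.log (c ω)) :=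
    ((hcm.mono hm).measurable.log).ennreal_ofReal
  have hmd : @Measurable Ω ENNReal mΩ _ fun ω => ENNReal.ofReal (Real.log (dd ω)) :=
    ((hdm.mono hm).measurable.log).ennreal_ofReal
  calc ∫⁻ ω, ENNReal.ofReal (Real.log (e ω)) ∂μ
      ≤ ∫⁻ ω, (ENNReal.ofReal t * ENNReal.ofReal (Real.log (c ω))
          + ENNReal.ofReal (1 - t) * ENNReal.ofReal (Real.log (dd ω))) ∂μ :=
        lintegral_mono_ae hlog
    _ = ENNReal.ofReal t * ∫⁻ ω, ENNReal.ofReal (Real.log (c ω)) ∂μ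
        + ENNReal.ofReal (1 - t) * ∫⁻ ω, ENNReal.ofReal (Real.log (dd ω)) ∂μ := by
        rw [lintegral_add_left (hmc.const_mul _), lintegral_const_mul _ hmc,
          lintegral_const_mul _ hmd]

/-- **Convexity of the conditional log-exponential objective (`M = ∞` case).**
For a probability measure `μ`, a sub-σ-algebra `m`, `λ > 0`, convex nonnegative `ℓ` and
measurable `φ` such that `exp(ℓ(Γφ)/λ)` is integrable for each `Γ`, the map
`Γ ↦ ∫ log 𝔼[exp(ℓ(Γφ)/λ) | m] dμ`, valued in `[0, +∞]`, is convex.  (Since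
`exp(ℓ(Γφ)/λ) ≥ 1`, the conditional expectation is a.e. `≥ 1` and the integrand is a.e.
nonnegative.) -/
theorem conditional_log_objective_convex
    {Ω : Type*} (m : MeasurableSpace Ω) {mΩ : MeasurableSpace Ω} (μ : Measure Ω) [IsProbabilityMeasure μ]
    (hm : m ≤ mΩ)
    (lam : ℝ) (hlam : 0 < lam) (d J : ℕ)
    (ℓ : (Fin d → ℝ) → ℝ) (hℓconv : ConvexOn ℝ Set.univ ℓ) (hℓ0 : ∀ u, 0 ≤ ℓ u)
    (φ : Ω → Fin J → ℝ) (hφ : Measurable φ)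
    (hint : ∀ Γ : Matrix (Fin d) (Fin J) ℝ,
      Integrable (fun ω => Real.exp (ℓ (Γ.mulVec (φ ω)) / lam)) μ)
    (G : Matrix (Fin d) (Fin J) ℝ → ENNReal)
    (hG : ∀ Γ, G Γ = ∫⁻ ω, ENNReal.ofReal (Real.log
        ((μ[fun ω' => Real.exp (ℓ (Γ.mulVec (φ ω')) / lam)|m]) ω)) ∂μ) :
    ∀ (Γ₁ Γ₂ : Matrix (Fin d) (Fin J) ℝ) (t : ℝ), 0 ≤ t → t ≤ 1 →
      G (t • Γ₁ + (1 - t) • Γ₂)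
        ≤ ENNReal.ofReal t * G Γ₁ + ENNReal.ofReal (1 - t) * G Γ₂ := by
  intro Γ₁ Γ₂ t ht ht1
  rw [hG, hG, hG]
  have hone : ∀ Γ : Matrix (Fin d) (Fin J) ℝ, ∀ ω,
      1 ≤ Real.exp (ℓ (Γ.mulVec (φ ω)) / lam) := fun Γ ω =>
    Real.one_le_exp (div_nonneg (hℓ0 _) hlam.le)
  refine key_lintegral_convex μ m hm t ht ht1 _ _ _ (hone Γ₁) (hone Γ₂)
    (hint Γ₁) (hint Γ₂) (hint _) ?_ (hone _)
  intro ω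
  have hmv : (t • Γ₁ + (1 - t) • Γ₂).mulVec (φ ω)
      = t • Γ₁.mulVec (φ ω) + (1 - t) • Γ₂.mulVec (φ ω) := by
    rw [Matrix.add_mulVec, Matrix.smul_mulVec, Matrix.smul_mulVec]
  have hconv := hℓconv.2 (Set.mem_univ (Γ₁.mulVec (φ ω)))
    (Set.mem_univ (Γ₂.mulVec (φ ω))) ht (show (0:ℝ) ≤ 1 - t by linarith)
    (show t + (1 - t) = 1 by ring)
  rw [smul_eq_mul, smul_eq_mul] at hconv
  calc Real.exp (ℓ ((t • Γ₁ + (1 - t) • Γ₂).mulVec (φ ω)) / lam)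
      ≤ Real.exp ((t * ℓ (Γ₁.mulVec (φ ω)) + (1 - t) * ℓ (Γ₂.mulVec (φ ω))) / lam) := by
        refine Real.exp_le_exp.mpr ?_
        rw [hmv]
        gcongr
    _ = Real.exp (ℓ (Γ₁.mulVec (φ ω)) / lam) ^ t
        * Real.exp (ℓ (Γ₂.mulVec (φ ω)) / lam) ^ (1 - t) := by
        rw [show (t * ℓ (Γ₁.mulVec (φ ω)) + (1 - t) * ℓ (Γ₂.mulVec (φ ω))) / lam
            = ℓ (Γ₁.mulVec (φ ω)) / lam * t + ℓ (Γ₂.mulVec (φ ω)) / lam * (1 - t) by ring,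
          Real.exp_add, Real.exp_mul, Real.exp_mul]
end

section
/- Let (Ω, ℱ, μ) be a probability space, 𝔪 ⊆ ℱ a sub-σ-algebra, λ > 0, and u, v : Ω → ℝ measurable functions such that exp(u/λ), exp((u+v)/λ), and |v|·exp(u/λ) are all μ-integrable. Then μ-almost everywhere, λ·log 𝔼[exp((u+v)/λ) | 𝔪] − λ·log 𝔼[exp(u/λ) | 𝔪] ≥ 𝔼[v·exp(u/λ) | 𝔪] / 𝔼[exp(u/λ) | 𝔪]. -/
open MeasureTheory

/-- A.e. positivity of conditional expectation of an everywhere-positive integrable function. -/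
lemma condexp_pos_aux {Ω : Type*} {m mΩ : MeasurableSpace Ω} (hm : m ≤ mΩ)
    (μ : Measure Ω) [IsProbabilityMeasure μ]
    {f : Ω → ℝ} (hf : Integrable f μ) (hpos : ∀ ω, 0 < f ω) :
    ∀ᵐ ω ∂μ, 0 < (μ[f|m]) ω := by
  set A := μ[f|m] with hA
  have h0 : 0 ≤ᵐ[μ] A := condExp_nonneg (Filter.Eventually.of_forall fun ω => (hpos ω).le)
  set s : Set Ω := A ⁻¹' Set.Iic 0 with hs_def
  have hs : MeasurableSet[m] s :=
    stronglyMeasurable_condExp.measurable measurableSet_Iic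
  have hs' : MeasurableSet[mΩ] s := hm s hs
  have hAf : ∫ ω in s, A ω ∂μ = ∫ ω in s, f ω ∂μ := setIntegral_condExp hm hf hs
  have hA_le : ∫ ω in s, A ω ∂μ ≤ 0 := setIntegral_nonpos hs' fun ω hω => hω
  have hf_nonneg : 0 ≤ᵐ[μ.restrict s] f :=
    Filter.Eventually.of_forall fun ω => (hpos ω).le
  have hint : IntegrableOn f s μ := hf.integrableOn
  have hμs : μ s = 0 := by
    by_contra hne
    have hpos' : 0 < μ (Function.support f ∩ s) := by
      have : Function.support f = Set.univ := by
        ext ω; simp [Function.support, (hpos ω).ne']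
      rw [this, Set.univ_inter]
      exact lt_of_le_of_ne zero_le (Ne.symm hne)
    have := (setIntegral_pos_iff_support_of_nonneg_ae hf_nonneg hint).mpr hpos'
    linarith
  have : μ {ω | ¬ 0 < A ω} = 0 := by
    have h7 : {ω | ¬ 0 < A ω} = s := by
      ext ω; simp [hs_def, not_lt]
    rw [h7]; exact hμs
  exact (ae_iff).mpr this

/-- **Conditional subgradient inequality for the log-exponential functional.**
For a probability measure `μ`, a sub-σ-algebra `m`, `λ > 0` and measurable `u, v` with
`exp(u/λ)`, `exp((u+v)/λ)`, `|v|·exp(u/λ)` integrable, one has, μ-almost everywhere,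
`λ log 𝔼[exp((u+v)/λ)|m] − λ log 𝔼[exp(u/λ)|m] ≥ 𝔼[v exp(u/λ)|m] / 𝔼[exp(u/λ)|m]`. -/
theorem conditional_log_exp_subgradient
    {Ω : Type*} (m : MeasurableSpace Ω) {mΩ : MeasurableSpace Ω} (μ : Measure Ω) [IsProbabilityMeasure μ]
    (hm : m ≤ mΩ)
    (lam : ℝ) (hlam : 0 < lam)
    (u v : Ω → ℝ) (hu : Measurable u) (hv : Measurable v)
    (hint1 : Integrable (fun ω => Real.exp (u ω / lam)) μ)
    (hint2 : Integrable (fun ω => Real.exp ((u ω + v ω) / lam)) μ)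
    (hint3 : Integrable (fun ω => |v ω| * Real.exp (u ω / lam)) μ) :
    ∀ᵐ ω ∂μ,
      lam * Real.log ((μ[fun ω' => Real.exp ((u ω' + v ω') / lam)|m]) ω)
          - lam * Real.log ((μ[fun ω' => Real.exp (u ω' / lam)|m]) ω)
        ≥ (μ[fun ω' => v ω' * Real.exp (u ω' / lam)|m]) ω
            / (μ[fun ω' => Real.exp (u ω' / lam)|m]) ω := by
  set f : Ω → ℝ := fun ω => Real.exp (u ω / lam) with hf_def
  set g : Ω → ℝ := fun ω => v ω * Real.exp (u ω / lam) with hg_def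
  set h : Ω → ℝ := fun ω => Real.exp ((u ω + v ω) / lam) with hh_def
  have hf_pos : ∀ ω, 0 < f ω := fun ω => Real.exp_pos _
  have hvm : Measurable[mΩ] fun ω => v ω * Real.exp (u ω / lam) :=
    hv.mul ((hu.div_const lam).exp)
  have hg_meas : AEStronglyMeasurable[mΩ] g μ := hvm.aestronglyMeasurable
  have hgint : Integrable g μ := by
    refine (integrable_norm_iff hg_meas).mp ?_
    have e : (fun ω => ‖g ω‖) = fun ω => |v ω| * Real.exp (u ω / lam) := by
      funext ω; rw [hg_def]; simp [Real.norm_eq_abs, abs_mul, abs_of_pos (Real.exp_pos _)]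
    rw [e]; exact hint3
  -- key inequality for each fixed real s
  have key : ∀ s : ℝ, ∀ᵐ ω ∂μ,
      Real.exp s * ((μ[f|m]) ω + (μ[g|m]) ω / lam - s * (μ[f|m]) ω) ≤ (μ[h|m]) ω := by
    intro s
    set c1 : ℝ := Real.exp s * (1 - s) with hc1
    set c2 : ℝ := Real.exp s / lam with hc2
    have hFint : Integrable (fun ω => c1 * f ω + c2 * g ω) μ :=
      (hint1.const_mul c1).add (hgint.const_mul c2)
    have hpt : (fun ω => c1 * f ω + c2 * g ω) ≤ᵐ[μ] h := by
      refine Filter.Eventually.of_forall fun ω => ?_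
      have h1 : (v ω / lam - s) + 1 ≤ Real.exp (v ω / lam - s) := Real.add_one_le_exp _
      have h2 : Real.exp s * ((v ω / lam - s) + 1) ≤ Real.exp (v ω / lam) := by
        have := mul_le_mul_of_nonneg_left h1 (Real.exp_pos s).le
        rwa [← Real.exp_add, add_sub_cancel] at this
      have h3 : f ω * (Real.exp s * ((v ω / lam - s) + 1)) ≤ f ω * Real.exp (v ω / lam) :=
        mul_le_mul_of_nonneg_left h2 (hf_pos ω).le
      have h4 : f ω * Real.exp (v ω / lam) = h ω := by
        simp only [hf_def, hh_def]; rw [← Real.exp_add, add_div]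
      rw [h4] at h3
      calc c1 * f ω + c2 * g ω = f ω * (Real.exp s * ((v ω / lam - s) + 1)) := by
            rw [hc1, hc2, hg_def, hf_def]; field_simp; ring
        _ ≤ h ω := h3
    have hmono := condExp_mono (m := m) hFint hint2 hpt
    have hlin : μ[(fun ω => c1 * f ω + c2 * g ω)|m]
        =ᵐ[μ] fun ω => c1 * (μ[f|m]) ω + c2 * (μ[g|m]) ω := by
      have e1 : (fun ω => c1 * f ω + c2 * g ω) = (c1 • f) + (c2 • g) := by
        funext ω; simp [smul_eq_mul]
      rw [e1]
      refine (condExp_add (m := m) (hint1.smul c1) (hgint.smul c2)).trans ?_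
      have e2 := condExp_smul (μ := μ) (m := m) c1 f
      have e3 := condExp_smul (μ := μ) (m := m) c2 g
      filter_upwards [e2, e3] with ω h2 h3
      simp only [Pi.add_apply]
      rw [h2, h3]; simp [smul_eq_mul]
    filter_upwards [hmono, hlin] with ω h1 h2
    have : c1 * (μ[f|m]) ω + c2 * (μ[g|m]) ω
        = Real.exp s * ((μ[f|m]) ω + (μ[g|m]) ω / lam - s * (μ[f|m]) ω) := by
      rw [hc1, hc2]; field_simp; ring
    rw [← this]
    calc c1 * (μ[f|m]) ω + c2 * (μ[g|m]) ω = (μ[fun ω => c1 * f ω + c2 * g ω|m]) ω := h2.symm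
      _ ≤ (μ[h|m]) ω := h1
  have keyQ : ∀ᵐ ω ∂μ, ∀ q : ℚ,
      Real.exp q * ((μ[f|m]) ω + (μ[g|m]) ω / lam - q * (μ[f|m]) ω) ≤ (μ[h|m]) ω :=
    (ae_all_iff).mpr fun q => key q
  have hApos : ∀ᵐ ω ∂μ, 0 < (μ[f|m]) ω := condexp_pos_aux hm μ hint1 hf_pos
  filter_upwards [keyQ, hApos] with ω hq hA
  set A := (μ[f|m]) ω
  set B := (μ[fun ω' => v ω' * Real.exp (u ω' / lam)|m]) ω with hB_def
  set C := (μ[fun ω' => Real.exp ((u ω' + v ω') / lam)|m]) ω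
  -- extend from rationals to all reals by continuity
  have hall : ∀ s : ℝ, Real.exp s * (A + B / lam - s * A) ≤ C := by
    have hclosed : IsClosed {s : ℝ | Real.exp s * (A + B / lam - s * A) ≤ C} := by
      apply isClosed_le _ continuous_const
      exact Real.continuous_exp.mul (by continuity)
    have hsub : Set.range ((↑) : ℚ → ℝ) ⊆ {s : ℝ | Real.exp s * (A + B / lam - s * A) ≤ C} := by
      rintro _ ⟨q, rfl⟩; exact hq q
    intro s
    have : closure (Set.range ((↑) : ℚ → ℝ)) ⊆ {s : ℝ | Real.exp s * (A + B / lam - s * A) ≤ C} :=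
      hclosed.closure_subset_iff.mpr hsub
    have hdense : closure (Set.range ((↑) : ℚ → ℝ)) = Set.univ := Rat.denseRange_cast.closure_range
    exact this (by rw [hdense]; trivial)
  set t : ℝ := B / (lam * A) with ht
  have htA : t * A = B / lam := by
    rw [ht]; field_simp
  have hC : Real.exp t * A ≤ C := by
    have := hall t
    rwa [htA, add_sub_cancel_right] at this
  have hCpos : 0 < C := lt_of_lt_of_le (by positivity) hC
  have hlog : t + Real.log A ≤ Real.log C := by
    have h5 := Real.log_le_log (by positivity) hC
    rwa [Real.log_mul (Real.exp_ne_zero t) hA.ne', Real.log_exp] at h5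
  have hBA : B / A = lam * t := by
    rw [ht]; field_simp
  rw [ge_iff_le, hBA]
  nlinarith [hlog, hlam]
end

section
/- Let μ be a probability measure on ℝ^k with full support (μ(U) > 0 for every nonempty open U ⊆ ℝ^k), and let w : ℝ^k → ℝ^b be continuous with each component μ-integrable and ∫ w dμ = 0, such that for every nonzero v ∈ ℝ^b the function x ↦ v·w(x) is not identically zero. Let A : ℝ^k → [1, ∞) be measurable and define G : ℝ^b → (0, +∞] by G(β) = ∫ A(x) exp(β·w(x)) dμ(x). Then: (i) for every t ∈ ℝ the sublevel set {β ∈ ℝ^b : G(β) ≤ t} is compact; and (ii) G is strictly convex on its effective domain, i.e., for all β₁ ≠ β₂ with G(β₁) < ∞ and G(β₂) < ∞ and all t ∈ (0,1), G(tβ₁ + (1−t)β₂) < t·G(β₁) + (1−t)·G(β₂). -/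
/-!
`G` is lower semicontinuous by Fatou's lemma. Since `A ≥ 1` and `exp y ≥ max y 0`, `G` dominates
`β ↦ ∫⁻ (β ⬝ᵥ w)⁺ dμ`, which is positively homogeneous and, being lower semicontinuous, attains a
minimum on the unit sphere; that minimum is positive because a continuous mean-zero function that is
not identically zero is positive on a nonempty open set, which has positive measure. So `G` grows
at least linearly and its sublevel sets are closed and bounded. Strict convexity comes from strict
convexity of `exp`, pointwise on the nonempty open set where `β₁ ⬝ᵥ w ≠ β₂ ⬝ᵥ w`.
-/

open MeasureTheory Filter Topology Metric
open scoped ENNReal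

section

variable {X : Type*} [MeasurableSpace X] {μ : Measure X}

theorem lowerSemicontinuous_lintegral {Y : Type*} [TopologicalSpace Y] [FirstCountableTopology Y]
    {f : Y → X → ℝ≥0∞} (hmeas : ∀ y, Measurable (f y))
    (hf : ∀ x, LowerSemicontinuous fun y => f y x) :
    LowerSemicontinuous fun y => ∫⁻ x, f y x ∂μ :=
  lowerSemicontinuous_iff_le_liminf.2 fun y =>
    calc ∫⁻ x, f y x ∂μ ≤ ∫⁻ x, liminf (fun z => f z x) (𝓝 y) ∂μ :=
          lintegral_mono fun x => (hf x).le_liminf y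
      _ ≤ liminf (fun z => ∫⁻ x, f z x ∂μ) (𝓝 y) := lintegral_liminf_le hmeas

variable [TopologicalSpace X] [μ.IsOpenPosMeasure]

theorem exists_pos_of_integral_eq_zero {f : X → ℝ} (hf : Continuous f) (hfi : Integrable f μ)
    (hf0 : ∫ x, f x ∂μ = 0) (hne : f ≠ 0) : ∃ x, 0 < f x := by
  by_contra! hle
  have hae : -f =ᵐ[μ] 0 :=
    (integral_eq_zero_iff_of_nonneg (fun x => neg_nonneg.2 (hle x)) hfi.neg).1
      (by rw [integral_neg, hf0, neg_zero])
  exact hne (neg_eq_zero.1 ((hf.neg.ae_eq_iff_eq μ continuous_const).1 hae))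

theorem lintegral_lt_lintegral_of_lt_on_isOpen {f g : X → ℝ≥0∞} (hg : Measurable g)
    (hgi : ∫⁻ x, g x ∂μ ≠ ∞) (hle : f ≤ g) {U : Set X} (hU : IsOpen U) (hUne : U.Nonempty)
    (hlt : ∀ x ∈ U, f x < g x) : ∫⁻ x, f x ∂μ < ∫⁻ x, g x ∂μ :=
  lintegral_strict_mono_of_ae_le_of_ae_lt_on hg.aemeasurable
    (ne_top_of_le_ne_top hgi (lintegral_mono hle)) (ae_of_all _ hle) (hU.measure_ne_zero μ hUne)
    (ae_of_all _ hlt)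

end

theorem LowerSemicontinuousOn.exists_ofReal_le_of_pos {Y : Type*} [TopologicalSpace Y]
    {f : Y → ℝ≥0∞} {K : Set Y} (hK : IsCompact K) (hf : LowerSemicontinuousOn f K)
    (hpos : ∀ y ∈ K, 0 < f y) : ∃ c : ℝ, 0 < c ∧ ∀ y ∈ K, ENNReal.ofReal c ≤ f y := by
  rcases K.eq_empty_or_nonempty with rfl | hne
  · exact ⟨1, one_pos, fun y hy => hy.elim⟩
  obtain ⟨y₀, hy₀, hmin⟩ := hf.exists_isMinOn hne hK
  obtain ⟨c, -, hc0, hc⟩ := ENNReal.lt_iff_exists_real_btwn.1 (hpos y₀ hy₀)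
  exact ⟨c, ENNReal.ofReal_pos.1 hc0, fun y hy => hc.le.trans (hmin hy)⟩

theorem isCompact_sublevel_of_linear_growth {E : Type*} [NormedAddCommGroup E] [ProperSpace E]
    {g : E → ℝ≥0∞} (hg : LowerSemicontinuous g) {c : ℝ} (hc : 0 < c)
    (hgrowth : ∀ β, ENNReal.ofReal (c * ‖β‖) ≤ g β) (T : ℝ) :
    IsCompact {β | g β ≤ ENNReal.ofReal T} := by
  refine isCompact_of_isClosed_isBounded (hg.isClosed_preimage _) ?_
  refine (isBounded_closedBall (x := 0) (r := max T 0 / c)).subset fun β hβ => ?_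
  rw [mem_closedBall_zero_iff, le_div_iff₀' hc]
  rcases ENNReal.ofReal_le_ofReal_iff'.1 ((hgrowth β).trans hβ) with h | h
  · exact le_max_of_le_left h
  · exact le_max_of_le_right h

theorem ofReal_mul_exp_convexComb_le {a : ℝ} (ha : 0 ≤ a) (y₁ y₂ : ℝ) {t : ℝ} (ht₀ : 0 ≤ t)
    (ht₁ : t ≤ 1) :
    ENNReal.ofReal (a * Real.exp (t * y₁ + (1 - t) * y₂))
      ≤ ENNReal.ofReal t * ENNReal.ofReal (a * Real.exp y₁)
        + ENNReal.ofReal (1 - t) * ENNReal.ofReal (a * Real.exp y₂) := by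
  rw [← ENNReal.ofReal_mul ht₀, ← ENNReal.ofReal_mul (sub_nonneg.2 ht₁),
    ← ENNReal.ofReal_add (by positivity) (mul_nonneg (sub_nonneg.2 ht₁) (by positivity))]
  refine ENNReal.ofReal_le_ofReal ?_
  have := convexOn_exp.2 (Set.mem_univ y₁) (Set.mem_univ y₂) ht₀ (sub_nonneg.2 ht₁) (by ring)
  simp only [smul_eq_mul] at this
  nlinarith [mul_le_mul_of_nonneg_left this ha]

theorem ofReal_mul_exp_convexComb_lt {a : ℝ} (ha : 0 < a) {y₁ y₂ : ℝ} (hy : y₁ ≠ y₂) {t : ℝ}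
    (ht₀ : 0 < t) (ht₁ : t < 1) :
    ENNReal.ofReal (a * Real.exp (t * y₁ + (1 - t) * y₂))
      < ENNReal.ofReal t * ENNReal.ofReal (a * Real.exp y₁)
        + ENNReal.ofReal (1 - t) * ENNReal.ofReal (a * Real.exp y₂) := by
  rw [← ENNReal.ofReal_mul ht₀.le, ← ENNReal.ofReal_mul (sub_nonneg.2 ht₁.le),
    ← ENNReal.ofReal_add (by positivity) (mul_nonneg (sub_nonneg.2 ht₁.le) (by positivity)),
    ENNReal.ofReal_lt_ofReal_iff
      (add_pos (by positivity) (mul_pos (sub_pos.2 ht₁) (by positivity)))]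
  have :=
    strictConvexOn_exp.2 (Set.mem_univ y₁) (Set.mem_univ y₂) hy ht₀ (sub_pos.2 ht₁) (by ring)
  simp only [smul_eq_mul] at this
  nlinarith [mul_lt_mul_of_pos_left this ha]

noncomputable def tiltedMGF {X ι : Type*} [MeasurableSpace X] [Fintype ι] (μ : Measure X)
    (A : X → ℝ) (w : X → ι → ℝ) (β : ι → ℝ) : ℝ≥0∞ :=
  ∫⁻ x, ENNReal.ofReal (A x * Real.exp (β ⬝ᵥ w x)) ∂μ

section

variable {X ι : Type*} [MeasurableSpace X] {μ : Measure X} [Fintype ι] {A : X → ℝ}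
  {w : X → ι → ℝ}

theorem lintegral_ofReal_dotProduct_le_tiltedMGF (hA : ∀ x, 1 ≤ A x) (β : ι → ℝ) :
    ∫⁻ x, ENNReal.ofReal (β ⬝ᵥ w x) ∂μ ≤ tiltedMGF μ A w β :=
  lintegral_mono fun x => ENNReal.ofReal_le_ofReal <| by
    nlinarith [hA x, Real.add_one_le_exp (β ⬝ᵥ w x), Real.exp_pos (β ⬝ᵥ w x)]

theorem lintegral_ofReal_smul_dotProduct {r : ℝ} (hr : 0 ≤ r) (β : ι → ℝ) :
    ∫⁻ x, ENNReal.ofReal ((r • β) ⬝ᵥ w x) ∂μ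
      = ENNReal.ofReal r * ∫⁻ x, ENNReal.ofReal (β ⬝ᵥ w x) ∂μ := by
  simp_rw [smul_dotProduct, smul_eq_mul, ENNReal.ofReal_mul hr]
  exact lintegral_const_mul' _ _ ENNReal.ofReal_ne_top

variable [TopologicalSpace X] [OpensMeasurableSpace X]

theorem lowerSemicontinuous_tiltedMGF (hA : Measurable A) (hw : Continuous w) :
    LowerSemicontinuous (tiltedMGF μ A w) :=
  lowerSemicontinuous_lintegral (fun β => by fun_prop) fun x =>
    (ENNReal.continuous_ofReal.comp (by fun_prop)).lowerSemicontinuous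

variable [μ.IsOpenPosMeasure]

theorem lintegral_ofReal_dotProduct_pos (hw : Continuous w)
    (hwi : ∀ j, Integrable (fun x => w x j) μ) (hw0 : ∀ j, ∫ x, w x j ∂μ = 0)
    {v : ι → ℝ} (hv : ∃ x, v ⬝ᵥ w x ≠ 0) : 0 < ∫⁻ x, ENNReal.ofReal (v ⬝ᵥ w x) ∂μ := by
  have hcont : Continuous fun x => v ⬝ᵥ w x := by fun_prop
  have hint : Integrable (fun x => v ⬝ᵥ w x) μ :=
    integrable_finsetSum _ fun j _ => (hwi j).const_mul (v j)
  have hmean : ∫ x, v ⬝ᵥ w x ∂μ = 0 := by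
    simp [dotProduct, integral_finsetSum _ fun j _ => (hwi j).const_mul (v j),
      integral_const_mul, hw0]
  obtain ⟨x₀, hx₀⟩ := exists_pos_of_integral_eq_zero hcont hint hmean
    fun h => hv.elim fun x hx => hx (congrFun h x)
  rw [lintegral_pos_iff_support (by fun_prop)]
  have hsupp : Function.support (fun x => ENNReal.ofReal (v ⬝ᵥ w x)) = {x | 0 < v ⬝ᵥ w x} := by
    ext x; simp
  rw [hsupp]
  exact (isOpen_lt continuous_const hcont).measure_pos μ ⟨x₀, hx₀⟩

theorem exists_ofReal_mul_norm_le_lintegral_ofReal_dotProduct (hw : Continuous w)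
    (hwi : ∀ j, Integrable (fun x => w x j) μ) (hw0 : ∀ j, ∫ x, w x j ∂μ = 0)
    (hwne : ∀ v : ι → ℝ, v ≠ 0 → ∃ x, v ⬝ᵥ w x ≠ 0) :
    ∃ c : ℝ, 0 < c ∧
      ∀ β : ι → ℝ, ENNReal.ofReal (c * ‖β‖) ≤ ∫⁻ x, ENNReal.ofReal (β ⬝ᵥ w x) ∂μ := by
  have hlsc : LowerSemicontinuous fun β : ι → ℝ => ∫⁻ x, ENNReal.ofReal (β ⬝ᵥ w x) ∂μ :=
    lowerSemicontinuous_lintegral (fun β => by fun_prop) fun x =>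
      (ENNReal.continuous_ofReal.comp (by fun_prop)).lowerSemicontinuous
  obtain ⟨c, hc, hcK⟩ := (hlsc.lowerSemicontinuousOn _).exists_ofReal_le_of_pos
    (isCompact_sphere (0 : ι → ℝ) 1) fun u hu =>
      lintegral_ofReal_dotProduct_pos hw hwi hw0 (hwne u (ne_zero_of_mem_unit_sphere ⟨u, hu⟩))
  refine ⟨c, hc, fun β => ?_⟩
  rcases eq_or_ne β 0 with rfl | hβ
  · simp
  have hu : ‖β‖⁻¹ • β ∈ sphere (0 : ι → ℝ) 1 := by
    simp [norm_smul, hβ]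
  calc ENNReal.ofReal (c * ‖β‖) = ENNReal.ofReal ‖β‖ * ENNReal.ofReal c := by
        rw [mul_comm, ENNReal.ofReal_mul (norm_nonneg _)]
    _ ≤ ENNReal.ofReal ‖β‖ * ∫⁻ x, ENNReal.ofReal ((‖β‖⁻¹ • β) ⬝ᵥ w x) ∂μ := by
        gcongr; exact hcK _ hu
    _ = ∫⁻ x, ENNReal.ofReal (β ⬝ᵥ w x) ∂μ := by
        rw [← lintegral_ofReal_smul_dotProduct (norm_nonneg _), smul_smul,
          mul_inv_cancel₀ (norm_ne_zero_iff.2 hβ), one_smul]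

theorem isCompact_tiltedMGF_sublevel (hA : Measurable A) (hA1 : ∀ x, 1 ≤ A x)
    (hw : Continuous w) (hwi : ∀ j, Integrable (fun x => w x j) μ)
    (hw0 : ∀ j, ∫ x, w x j ∂μ = 0) (hwne : ∀ v : ι → ℝ, v ≠ 0 → ∃ x, v ⬝ᵥ w x ≠ 0) (T : ℝ) :
    IsCompact {β | tiltedMGF μ A w β ≤ ENNReal.ofReal T} := by
  obtain ⟨c, hc, hgrowth⟩ :=
    exists_ofReal_mul_norm_le_lintegral_ofReal_dotProduct hw hwi hw0 hwne
  exact isCompact_sublevel_of_linear_growth (lowerSemicontinuous_tiltedMGF hA hw) hc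
    (fun β => (hgrowth β).trans (lintegral_ofReal_dotProduct_le_tiltedMGF hA1 β)) T

theorem tiltedMGF_convexComb_lt (hA : Measurable A) (hApos : ∀ x, 0 < A x) (hw : Continuous w)
    {β₁ β₂ : ι → ℝ} (hβ : ∃ x, β₁ ⬝ᵥ w x ≠ β₂ ⬝ᵥ w x)
    (h₁ : tiltedMGF μ A w β₁ ≠ ∞) (h₂ : tiltedMGF μ A w β₂ ≠ ∞) {t : ℝ} (ht₀ : 0 < t)
    (ht₁ : t < 1) :
    tiltedMGF μ A w (t • β₁ + (1 - t) • β₂)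
      < ENNReal.ofReal t * tiltedMGF μ A w β₁ + ENNReal.ofReal (1 - t) * tiltedMGF μ A w β₂ := by
  have hmeas : ∀ β : ι → ℝ, Measurable fun x => ENNReal.ofReal (A x * Real.exp (β ⬝ᵥ w x)) :=
    fun β => by fun_prop
  have hdot : ∀ x,
      (t • β₁ + (1 - t) • β₂) ⬝ᵥ w x = t * (β₁ ⬝ᵥ w x) + (1 - t) * (β₂ ⬝ᵥ w x) :=
    fun x => by simp [add_dotProduct, smul_dotProduct]
  have hrhs : ENNReal.ofReal t * tiltedMGF μ A w β₁ + ENNReal.ofReal (1 - t) * tiltedMGF μ A w β₂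
      = ∫⁻ x, ENNReal.ofReal t * ENNReal.ofReal (A x * Real.exp (β₁ ⬝ᵥ w x))
          + ENNReal.ofReal (1 - t) * ENNReal.ofReal (A x * Real.exp (β₂ ⬝ᵥ w x)) ∂μ := by
    rw [lintegral_add_left ((hmeas β₁).const_mul _), lintegral_const_mul _ (hmeas β₁),
      lintegral_const_mul _ (hmeas β₂), tiltedMGF, tiltedMGF]
  have hfin : ENNReal.ofReal t * tiltedMGF μ A w β₁ + ENNReal.ofReal (1 - t) * tiltedMGF μ A w β₂
      ≠ ∞ := by finiteness
  have hU : IsOpen {x | β₁ ⬝ᵥ w x ≠ β₂ ⬝ᵥ w x} := isOpen_ne_fun (by fun_prop) (by fun_prop)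
  rw [hrhs] at hfin ⊢
  refine lintegral_lt_lintegral_of_lt_on_isOpen
    (((hmeas β₁).const_mul _).add ((hmeas β₂).const_mul _)) hfin (fun x => ?_) hU hβ
    (fun x hx => ?_)
  · rw [hdot]
    exact ofReal_mul_exp_convexComb_le (hApos x).le _ _ ht₀.le ht₁.le
  · rw [hdot]
    exact ofReal_mul_exp_convexComb_lt (hApos x) hx ht₀ ht₁

end

theorem tilted_mgf_sublevel_compact_and_strictly_convex_general
    (k b : ℕ) (μ : Measure (Fin k → ℝ))
    (hfull : ∀ U : Set (Fin k → ℝ), IsOpen U → U.Nonempty → 0 < μ U)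
    (w : (Fin k → ℝ) → Fin b → ℝ) (hwcont : Continuous w)
    (hwint : ∀ j, Integrable (fun x => w x j) μ)
    (hw0 : ∀ j, ∫ x, w x j ∂μ = 0)
    (hwnz : ∀ v : Fin b → ℝ, v ≠ 0 → ∃ x, ∑ j, v j * w x j ≠ 0)
    (A : (Fin k → ℝ) → ℝ) (hAmeas : Measurable A) (hA1 : ∀ x, 1 ≤ A x)
    (G : (Fin b → ℝ) → ENNReal)
    (hG : ∀ β, G β = ∫⁻ x, ENNReal.ofReal (A x * Real.exp (∑ j, β j * w x j)) ∂μ) :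
    (∀ t : ℝ, IsCompact {β : Fin b → ℝ | G β ≤ ENNReal.ofReal t}) ∧
    (∀ β₁ β₂ : Fin b → ℝ, β₁ ≠ β₂ → G β₁ < ⊤ → G β₂ < ⊤ →
      ∀ t : ℝ, 0 < t → t < 1 →
        G (t • β₁ + (1 - t) • β₂)
          < ENNReal.ofReal t * G β₁ + ENNReal.ofReal (1 - t) * G β₂) := by
  have : μ.IsOpenPosMeasure := ⟨fun U hU hne => (hfull U hU hne).ne'⟩
  obtain rfl : G = tiltedMGF μ A w := funext hG
  refine ⟨isCompact_tiltedMGF_sublevel hAmeas hA1 hwcont hwint hw0 hwnz,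
    fun β₁ β₂ hne h₁ h₂ t ht₀ ht₁ => ?_⟩
  have hsep : ∃ x, β₁ ⬝ᵥ w x ≠ β₂ ⬝ᵥ w x := by
    obtain ⟨x, hx⟩ := hwnz (β₁ - β₂) (sub_ne_zero.2 hne)
    exact ⟨x, fun h => hx (by rw [← dotProduct, sub_dotProduct, h, sub_self])⟩
  exact tiltedMGF_convexComb_lt hAmeas (fun x => one_pos.trans_le (hA1 x)) hwcont hsep
    h₁.ne h₂.ne ht₀ ht₁

/-- **Compact sublevel sets and strict convexity of the tilted moment-generating function**
(Lemma on the `β`-objective).  Let `μ` be a probability measure on `ℝ^k` with full support,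
`w : ℝ^k → ℝ^b` continuous with integrable components, mean zero, and such that `v·w` is
not identically zero for `v ≠ 0`; let `A ≥ 1` be measurable and
`G(β) = ∫ A(x) exp(β·w(x)) dμ(x) ∈ (0, +∞]`.  Then every sublevel set of `G` is compact,
and `G` is strictly convex on its effective domain. -/
theorem tilted_mgf_sublevel_compact_and_strictly_convex
    (k b : ℕ) (μ : Measure (Fin k → ℝ)) [IsProbabilityMeasure μ]
    (hfull : ∀ U : Set (Fin k → ℝ), IsOpen U → U.Nonempty → 0 < μ U)
    (w : (Fin k → ℝ) → Fin b → ℝ) (hwcont : Continuous w)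
    (hwint : ∀ j, Integrable (fun x => w x j) μ)
    (hw0 : ∀ j, ∫ x, w x j ∂μ = 0)
    (hwnz : ∀ v : Fin b → ℝ, v ≠ 0 → ∃ x, ∑ j, v j * w x j ≠ 0)
    (A : (Fin k → ℝ) → ℝ) (hAmeas : Measurable A) (hA1 : ∀ x, 1 ≤ A x)
    (G : (Fin b → ℝ) → ENNReal)
    (hG : ∀ β, G β = ∫⁻ x, ENNReal.ofReal (A x * Real.exp (∑ j, β j * w x j)) ∂μ) :
    (∀ t : ℝ, IsCompact {β : Fin b → ℝ | G β ≤ ENNReal.ofReal t}) ∧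
    (∀ β₁ β₂ : Fin b → ℝ, β₁ ≠ β₂ → G β₁ < ⊤ → G β₂ < ⊤ →
      ∀ t : ℝ, 0 < t → t < 1 →
        G (t • β₁ + (1 - t) • β₂)
          < ENNReal.ofReal t * G β₁ + ENNReal.ofReal (1 - t) * G β₂) :=
  tilted_mgf_sublevel_compact_and_strictly_convex_general k b μ hfull w hwcont hwint hw0 hwnz A
    hAmeas hA1 G hG
end

section
/- For each s ∈ ℕ let (T_s, W_s) be a random vector in ℝ^d × ℝ^b defined on a probability space (Ω_s, P_s), and suppose (T_s, W_s) converges in distribution to a random vector (T, W) on a probability space (Ω, P). Let ℓ* : ℝ^d → [1, ∞) be continuous, and assume that for every unit vector u ∈ ℝ^b one has P(u·W > 0) > 0. Then liminf_{s→∞} inf_{β ∈ ℝ^b} E_{P_s}[ ℓ*(T_s) exp(β·W_s) ] ≥ inf_{β ∈ ℝ^b} E_P[ ℓ*(T) exp(β·W) ], where all expectations of nonnegative functions are valued in [0, +∞]. -/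
/-!
If the claim fails, fix `c` strictly between the two sides, a subsequence along which the infima
stay below `c`, and `β_k` at which the objective `E[ℓ(T) e^{β·W}]` is below `c`. The laws of
`(β_k, T_s, W_s)` converge weakly whenever `β_k` converges, so the portmanteau theorem makes the
objective jointly lower semicontinuous in the law and in `β`: if `β_k` has a bounded subsequence,
its limit `β` has limit objective at most `c`. Otherwise `|β_k| → ∞` along a subsequence whose
directions tend to a unit vector `u`. Some `δ > 0` has `P(u·W > δ) > 0`, the portmanteau bound
for open sets keeps the masses `P_s(u_k·W_s > δ)` away from zero, and by Markov's inequality the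
objective at `β_k` is at least `e^{|β_k| δ}` times that mass, which blows up.
-/

open MeasureTheory Filter Topology
open scoped ENNReal

section Subsequences

variable {F : Type*} [NormedAddCommGroup F] [ProperSpace F]

theorem exists_subseq_tendsto_of_frequently_norm_le {x : ℕ → F} {R : ℝ}
    (h : ∃ᶠ k in atTop, ‖x k‖ ≤ R) :
    ∃ ψ : ℕ → ℕ, StrictMono ψ ∧ ∃ a, Tendsto (x ∘ ψ) atTop (𝓝 a) := by
  obtain ⟨φ, hφ, hφR⟩ := extraction_of_frequently_atTop h
  obtain ⟨a, -, ψ, hψ, hlim⟩ := (isCompact_closedBall (0 : F) R).tendsto_subseq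
    (x := x ∘ φ) fun k => mem_closedBall_zero_iff.mpr (hφR k)
  exact ⟨φ ∘ ψ, hφ.comp hψ, a, hlim⟩

theorem exists_subseq_tendsto_inv_norm_smul [NormedSpace ℝ F] {x : ℕ → F}
    (hx : Tendsto (fun k => ‖x k‖) atTop atTop) :
    ∃ ψ : ℕ → ℕ, StrictMono ψ ∧ ∃ u, ‖u‖ = 1 ∧
      Tendsto (fun k => ‖x (ψ k)‖⁻¹ • x (ψ k)) atTop (𝓝 u) := by
  have hdir : ∀ k, ‖‖x k‖⁻¹ • x k‖ ≤ 1 := fun k => by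
    rw [norm_smul, norm_inv, norm_norm]
    exact inv_mul_le_one
  obtain ⟨u, -, ψ, hψ, hlim⟩ := (isCompact_closedBall (0 : F) 1).tendsto_subseq
    (x := fun k => ‖x k‖⁻¹ • x k) fun k => mem_closedBall_zero_iff.mpr (hdir k)
  refine ⟨ψ, hψ, u, tendsto_nhds_unique hlim.norm (tendsto_const_nhds.congr' ?_), hlim⟩
  filter_upwards [(hx.comp hψ.tendsto_atTop).eventually_gt_atTop 0] with k hk
  rw [Function.comp_apply, norm_smul, norm_inv, norm_norm]
  exact (inv_mul_cancel₀ hk.ne').symm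

theorem exists_subseq_tendsto_or_tendsto_norm_atTop [NormedSpace ℝ F] (x : ℕ → F) :
    ∃ ψ : ℕ → ℕ, StrictMono ψ ∧ ((∃ a, Tendsto (x ∘ ψ) atTop (𝓝 a)) ∨
      (Tendsto (fun k => ‖x (ψ k)‖) atTop atTop ∧ ∃ u, ‖u‖ = 1 ∧
        Tendsto (fun k => ‖x (ψ k)‖⁻¹ • x (ψ k)) atTop (𝓝 u))) := by
  by_cases hbdd : ∃ R, ∃ᶠ k in atTop, ‖x k‖ ≤ R
  · obtain ⟨R, hR⟩ := hbdd
    obtain ⟨ψ, hψ, hlim⟩ := exists_subseq_tendsto_of_frequently_norm_le hR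
    exact ⟨ψ, hψ, .inl hlim⟩
  · have hx : Tendsto (fun k => ‖x k‖) atTop atTop := by
      push Not at hbdd
      exact tendsto_atTop.mpr fun R => (hbdd R).mono fun k hk => hk.le
    obtain ⟨ψ, hψ, hu⟩ := exists_subseq_tendsto_inv_norm_smul hx
    exact ⟨ψ, hψ, .inr ⟨hx.comp hψ.tendsto_atTop, hu⟩⟩

end Subsequences

theorem toMeasure_diracProba_prod {B α : Type*} [MeasurableSpace B] [MeasurableSpace α]
    (β : B) (ν : ProbabilityMeasure α) :
    ((diracProba β).prod ν : Measure (B × α)) = (ν : Measure α).map (Prod.mk β) :=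
  Measure.dirac_prod β

section JointPortmanteau

open TopologicalSpace

variable {B α : Type*} [TopologicalSpace B] [MeasurableSpace B] [OpensMeasurableSpace B]
  [SecondCountableTopology B] [PseudoMetrizableSpace B]
  [TopologicalSpace α] [MeasurableSpace α] [OpensMeasurableSpace α]
  [SecondCountableTopology α] [PseudoMetrizableSpace α]

theorem tendsto_diracProba_prod {ι : Type*} {L : Filter ι} {β : B} {βs : ι → B}
    {ν : ProbabilityMeasure α} {νs : ι → ProbabilityMeasure α}
    (hβ : Tendsto βs L (𝓝 β)) (hν : Tendsto νs L (𝓝 ν)) :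
    Tendsto (fun i => (diracProba (βs i)).prod (νs i)) L (𝓝 ((diracProba β).prod ν)) :=
  (ProbabilityMeasure.continuous_prod.tendsto _).comp
    (((continuous_diracProba.tendsto β).comp hβ).prodMk_nhds hν)

variable {β : B} {βs : ℕ → B} {ν : ProbabilityMeasure α} {νs : ℕ → ProbabilityMeasure α}

theorem measure_preimage_le_liminf_of_tendsto (hβ : Tendsto βs atTop (𝓝 β))
    (hν : Tendsto νs atTop (𝓝 ν)) {O : Set (B × α)} (hO : IsOpen O) :
    (ν : Measure α) (Prod.mk β ⁻¹' O) ≤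
      liminf (fun k => (νs k : Measure α) (Prod.mk (βs k) ⁻¹' O)) atTop := by
  have key := ProbabilityMeasure.le_liminf_measure_open_of_tendsto
    (tendsto_diracProba_prod hβ hν) hO
  simpa only [toMeasure_diracProba_prod,
    Measure.map_apply measurable_prodMk_left hO.measurableSet] using key

theorem lintegral_le_liminf_lintegral_of_tendsto (hβ : Tendsto βs atTop (𝓝 β))
    (hν : Tendsto νs atTop (𝓝 ν)) {G : B × α → ℝ} (hG : Continuous G) (hG0 : 0 ≤ G) :
    ∫⁻ x, ENNReal.ofReal (G (β, x)) ∂ν ≤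
      liminf (fun k => ∫⁻ x, ENNReal.ofReal (G (βs k, x)) ∂(νs k)) atTop := by
  have key := lintegral_le_liminf_lintegral_of_forall_isOpen_measure_le_liminf_measure hG hG0
    fun _ hO => ProbabilityMeasure.le_liminf_measure_open_of_tendsto
      (tendsto_diracProba_prod hβ hν) hO
  have hGm : Measurable fun z => ENNReal.ofReal (G z) := hG.measurable.ennreal_ofReal
  simpa only [toMeasure_diracProba_prod, lintegral_map hGm measurable_prodMk_left] using key

end JointPortmanteau

theorem exists_pos_measure_setOf_lt {Ω : Type*} [MeasurableSpace Ω] {μ : Measure Ω}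
    {f : Ω → ℝ} (hf : μ {x | 0 < f x} ≠ 0) : ∃ δ > 0, μ {x | δ < f x} ≠ 0 := by
  by_contra! hnull
  refine hf (measure_mono_null (fun x (hx : 0 < f x) => ?_) (measure_iUnion_null fun n : ℕ =>
    hnull (1 / (n + 1)) Nat.one_div_pos_of_nat))
  obtain ⟨n, hn⟩ := exists_nat_one_div_lt hx
  exact Set.mem_iUnion.mpr ⟨n, hn⟩

section WeightedMGF

variable {X : Type*} [MeasurableSpace X] {b : ℕ}

noncomputable def weightedMGF (ℓ : X → ℝ) (μ : Measure (X × (Fin b → ℝ))) (β : Fin b → ℝ) :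
    ℝ≥0∞ :=
  ∫⁻ z, ENNReal.ofReal (ℓ z.1 * Real.exp (β ⬝ᵥ z.2)) ∂μ

theorem weightedMGF_map {Ω : Type*} [MeasurableSpace Ω] {ℓ : X → ℝ} (hℓ : Measurable ℓ)
    {μ : Measure Ω} {f : Ω → X × (Fin b → ℝ)} (hf : Measurable f) (β : Fin b → ℝ) :
    weightedMGF ℓ (μ.map f) β =
      ∫⁻ ω, ENNReal.ofReal (ℓ (f ω).1 * Real.exp (β ⬝ᵥ (f ω).2)) ∂μ :=
  lintegral_map (by fun_prop) hf

theorem ofReal_exp_mul_measure_le_weightedMGF {ℓ : X → ℝ} (hℓ : Measurable ℓ)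
    (hℓ1 : ∀ x, 1 ≤ ℓ x) (μ : Measure (X × (Fin b → ℝ))) {r : ℝ} (hr : 0 ≤ r)
    (u : Fin b → ℝ) (δ : ℝ) :
    ENNReal.ofReal (Real.exp (r * δ)) * μ {z | δ < u ⬝ᵥ z.2} ≤ weightedMGF ℓ μ (r • u) := by
  refine (mul_le_mul_right (measure_mono fun z hz => ?_) _).trans
    (mul_meas_ge_le_lintegral₀ (Measurable.aemeasurable (by fun_prop)) _)
  replace hz : δ < u ⬝ᵥ z.2 := hz
  refine ENNReal.ofReal_le_ofReal ?_
  rw [smul_dotProduct, smul_eq_mul]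
  calc Real.exp (r * δ) ≤ Real.exp (r * (u ⬝ᵥ z.2)) := by gcongr
    _ ≤ ℓ z.1 * Real.exp (r * (u ⬝ᵥ z.2)) := le_mul_of_one_le_left (by positivity) (hℓ1 z.1)

variable [TopologicalSpace X] [OpensMeasurableSpace X] [SecondCountableTopology X]
  [TopologicalSpace.PseudoMetrizableSpace X]
  {ν : ProbabilityMeasure (X × (Fin b → ℝ))} {νs : ℕ → ProbabilityMeasure (X × (Fin b → ℝ))}
  {ℓ : X → ℝ}

theorem weightedMGF_le_liminf (hℓ : Continuous ℓ) (hℓ0 : 0 ≤ ℓ)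
    (hν : Tendsto νs atTop (𝓝 ν)) {β : Fin b → ℝ} {βs : ℕ → Fin b → ℝ}
    (hβ : Tendsto βs atTop (𝓝 β)) :
    weightedMGF ℓ ν β ≤ liminf (fun k => weightedMGF ℓ (νs k) (βs k)) atTop :=
  lintegral_le_liminf_lintegral_of_tendsto hβ hν
    (G := fun p => ℓ p.2.1 * Real.exp (p.1 ⬝ᵥ p.2.2)) (by fun_prop)
    fun p => mul_nonneg (hℓ0 _) (Real.exp_pos _).le

theorem tendsto_weightedMGF_top (hℓ : Measurable ℓ) (hℓ1 : ∀ x, 1 ≤ ℓ x)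
    (hν : Tendsto νs atTop (𝓝 ν)) {βs : ℕ → Fin b → ℝ} {u : Fin b → ℝ}
    (hβ : Tendsto (fun k => ‖βs k‖) atTop atTop)
    (hu : Tendsto (fun k => ‖βs k‖⁻¹ • βs k) atTop (𝓝 u))
    (hpos : (ν : Measure (X × (Fin b → ℝ))) {z | 0 < u ⬝ᵥ z.2} ≠ 0) :
    Tendsto (fun k => weightedMGF ℓ (νs k) (βs k)) atTop (𝓝 ⊤) := by
  obtain ⟨δ, hδ, hmass⟩ := exists_pos_measure_setOf_lt hpos
  set m := (ν : Measure (X × (Fin b → ℝ))) {z | δ < u ⬝ᵥ z.2}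
  have hopen : IsOpen {p : (Fin b → ℝ) × X × (Fin b → ℝ) | δ < p.1 ⬝ᵥ p.2.2} :=
    isOpen_lt continuous_const (by fun_prop)
  have hmass_liminf : m / 2 < liminf (fun k =>
      (νs k : Measure (X × (Fin b → ℝ))) {z | δ < (‖βs k‖⁻¹ • βs k) ⬝ᵥ z.2}) atTop :=
    (ENNReal.half_lt_self hmass (measure_ne_top _ _)).trans_le
      (measure_preimage_le_liminf_of_tendsto hu hν hopen :)
  have hexp :
      Tendsto (fun k => ENNReal.ofReal (Real.exp (‖βs k‖ * δ)) * (m / 2)) atTop (𝓝 ⊤) := by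
    have hm2 : m / 2 ≠ 0 := (ENNReal.half_pos hmass).ne'
    have := ENNReal.Tendsto.mul_const (b := m / 2) (ENNReal.tendsto_ofReal_atTop.comp
      (Real.tendsto_exp_atTop.comp (hβ.atTop_mul_const hδ))) (.inl ENNReal.top_ne_zero)
    rwa [ENNReal.top_mul hm2] at this
  refine tendsto_nhds_top_mono hexp ?_
  filter_upwards [eventually_lt_of_lt_liminf hmass_liminf] with k hk
  calc ENNReal.ofReal (Real.exp (‖βs k‖ * δ)) * (m / 2)
      ≤ ENNReal.ofReal (Real.exp (‖βs k‖ * δ)) *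
          (νs k : Measure (X × (Fin b → ℝ))) {z | δ < (‖βs k‖⁻¹ • βs k) ⬝ᵥ z.2} := by gcongr
    _ ≤ weightedMGF ℓ (νs k) (‖βs k‖ • ‖βs k‖⁻¹ • βs k) :=
      ofReal_exp_mul_measure_le_weightedMGF hℓ hℓ1 _ (norm_nonneg _) _ _
    _ = weightedMGF ℓ (νs k) (βs k) := by
      by_cases h : βs k = 0
      · simp [h]
      · rw [smul_inv_smul₀ (norm_ne_zero_iff.mpr h)]

end WeightedMGF

theorem iInf_weightedMGF_le_liminf {X : Type*} [MeasurableSpace X] [TopologicalSpace X]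
    [OpensMeasurableSpace X] [SecondCountableTopology X] [TopologicalSpace.PseudoMetrizableSpace X]
    {b : ℕ} {ν : ProbabilityMeasure (X × (Fin b → ℝ))}
    {νs : ℕ → ProbabilityMeasure (X × (Fin b → ℝ))} (hν : Tendsto νs atTop (𝓝 ν))
    {ℓ : X → ℝ} (hℓ : Continuous ℓ) (hℓ1 : ∀ x, 1 ≤ ℓ x)
    (hpos : ∀ u ≠ 0, (ν : Measure (X × (Fin b → ℝ))) {z | 0 < u ⬝ᵥ z.2} ≠ 0) :
    ⨅ β : Fin b → ℝ, weightedMGF ℓ ν β ≤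
      liminf (fun s => ⨅ β : Fin b → ℝ, weightedMGF ℓ (νs s) β) atTop := by
  by_contra! hlt
  obtain ⟨c, hliminf_c, hc⟩ := exists_between hlt
  obtain ⟨φ, hφ, hφc⟩ := extraction_of_frequently_atTop (frequently_lt_of_liminf_lt
    (by isBoundedDefault) hliminf_c)
  choose βs hβs using fun k => iInf_lt_iff.mp (hφc k)
  obtain ⟨ψ, hψ, ⟨β, hβ⟩ | ⟨hnorm, u, hu1, hu⟩⟩ := exists_subseq_tendsto_or_tendsto_norm_atTop βs
  all_goals have hνψ := hν.comp (hφ.comp hψ).tendsto_atTop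
  · have hle : weightedMGF ℓ ν β ≤ c :=
      (weightedMGF_le_liminf hℓ (fun x => zero_le_one.trans (hℓ1 x)) hνψ hβ).trans
        (liminf_le_of_frequently_le (.of_forall fun k => (hβs (ψ k)).le))
    exact (hc.trans_le (iInf_le _ β)).not_ge hle
  · have htop := tendsto_weightedMGF_top hℓ.measurable hℓ1 hνψ hnorm hu
      (hpos u (norm_ne_zero_iff.mp (by rw [hu1]; exact one_ne_zero)))
    obtain ⟨k, hk⟩ := (htop.eventually (eventually_gt_nhds hc.ne_top.lt_top)).exists
    exact (hβs (ψ k)).not_gt hk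

theorem tendsto_map_of_forall_integral_tendsto {E : Type*} [TopologicalSpace E]
    [MeasurableSpace E] [OpensMeasurableSpace E]
    {Ωs : ℕ → Type*} [∀ s, MeasurableSpace (Ωs s)] {Ps : ∀ s, ProbabilityMeasure (Ωs s)}
    {Y : ∀ s, Ωs s → E} (hY : ∀ s, Measurable (Y s))
    {Ω : Type*} [MeasurableSpace Ω] {P : ProbabilityMeasure Ω} {Y₀ : Ω → E} (hY₀ : Measurable Y₀)
    (hconv : ∀ f : E → ℝ, Continuous f → (∃ C : ℝ, ∀ z, |f z| ≤ C) →
      Tendsto (fun s => ∫ ω, f (Y s ω) ∂(Ps s)) atTop (𝓝 (∫ ω, f (Y₀ ω) ∂P))) :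
    Tendsto (fun s => (Ps s).map (hY s).aemeasurable) atTop (𝓝 (P.map hY₀.aemeasurable)) := by
  refine ProbabilityMeasure.tendsto_iff_forall_integral_tendsto.mpr fun f => ?_
  simp only [ProbabilityMeasure.toMeasure_map]
  rw [integral_map hY₀.aemeasurable f.continuous.aestronglyMeasurable]
  simp only [integral_map (hY _).aemeasurable f.continuous.aestronglyMeasurable]
  exact hconv f f.continuous ⟨‖f‖, f.norm_coe_le_norm⟩

theorem exists_pos_smul_sum_sq_eq_one {b : ℕ} {u : Fin b → ℝ} (hu : u ≠ 0) :
    ∃ c : ℝ, 0 < c ∧ ∑ j, (c • u) j ^ 2 = 1 := by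
  have hpos : 0 < ∑ j, u j ^ 2 := by
    obtain ⟨j, hj⟩ := Function.ne_iff.mp hu
    exact Finset.sum_pos' (fun i _ => sq_nonneg _) ⟨j, Finset.mem_univ _, sq_pos_of_ne_zero hj⟩
  refine ⟨(√(∑ j, u j ^ 2))⁻¹, by positivity, ?_⟩
  simp only [Pi.smul_apply, smul_eq_mul, mul_pow, ← Finset.mul_sum, inv_pow,
    Real.sq_sqrt hpos.le]
  exact inv_mul_cancel₀ hpos.ne'

/-- **Lower semicontinuity of the dual objective along convergence in distribution**
(Lemma `fixed-h-liminf`).  Suppose random vectors `(T_s, W_s)` on probability spaces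
`(Ω_s, P_s)` converge in distribution to `(T, W)` on `(Ω, P)`, `ℓ* ≥ 1` is continuous,
and for every unit vector `u ∈ ℝ^b` one has `P(u·W > 0) > 0`.  Then
`liminf_s inf_β E_{P_s}[ℓ*(T_s) exp(β·W_s)] ≥ inf_β E_P[ℓ*(T) exp(β·W)]`
(expectations of nonnegative functions valued in `[0, +∞]`). -/
theorem liminf_inf_beta_exponential
    (d b : ℕ)
    (Ωs : ℕ → Type*) [∀ s, MeasurableSpace (Ωs s)]
    (Ps : ∀ s, Measure (Ωs s)) [∀ s, IsProbabilityMeasure (Ps s)]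
    (T : ∀ s, Ωs s → Fin d → ℝ) (W : ∀ s, Ωs s → Fin b → ℝ)
    (hTW : ∀ s, Measurable (fun ω => (T s ω, W s ω)))
    {Ω : Type*} [MeasurableSpace Ω] (P : Measure Ω) [IsProbabilityMeasure P]
    (T₀ : Ω → Fin d → ℝ) (W₀ : Ω → Fin b → ℝ)
    (hTW₀ : Measurable (fun ω => (T₀ ω, W₀ ω)))
    (hconv : ∀ f : ((Fin d → ℝ) × (Fin b → ℝ)) → ℝ, Continuous f →
      (∃ C : ℝ, ∀ z, |f z| ≤ C) →
      Tendsto (fun s => ∫ ω, f (T s ω, W s ω) ∂(Ps s)) atTop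
        (nhds (∫ ω, f (T₀ ω, W₀ ω) ∂P)))
    (ℓstar : (Fin d → ℝ) → ℝ) (hℓcont : Continuous ℓstar) (hℓ1 : ∀ u, 1 ≤ ℓstar u)
    (hW : ∀ u : Fin b → ℝ, (∑ j, (u j) ^ 2 = 1) →
      0 < P {ω | 0 < ∑ j, u j * W₀ ω j}) :
    (⨅ β : Fin b → ℝ,
        ∫⁻ ω, ENNReal.ofReal (ℓstar (T₀ ω) * Real.exp (∑ j, β j * W₀ ω j)) ∂P)
      ≤ liminf (fun s => ⨅ β : Fin b → ℝ,
          ∫⁻ ω, ENNReal.ofReal (ℓstar (T s ω) * Real.exp (∑ j, β j * W s ω j)) ∂(Ps s))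
          atTop := by
  have hν := tendsto_map_of_forall_integral_tendsto (Ps := fun s => ⟨Ps s, inferInstance⟩)
    (P := ⟨P, inferInstance⟩) hTW hTW₀ hconv
  have hpos : ∀ u ≠ 0, Measure.map (fun ω => (T₀ ω, W₀ ω)) P {z | 0 < u ⬝ᵥ z.2} ≠ 0 := by
    intro u hu
    obtain ⟨c, hc, hcu⟩ := exists_pos_smul_sum_sq_eq_one hu
    rw [Measure.map_apply hTW₀ (measurableSet_lt measurable_const (by fun_prop))]
    convert (hW _ hcu).ne' using 2
    ext ω
    change 0 < u ⬝ᵥ W₀ ω ↔ 0 < (c • u) ⬝ᵥ W₀ ω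
    rw [smul_dotProduct, smul_eq_mul, mul_pos_iff_of_pos_left hc]
  have key : ⨅ β, weightedMGF ℓstar (P.map fun ω => (T₀ ω, W₀ ω)) β ≤ liminf (fun s =>
      ⨅ β, weightedMGF ℓstar ((Ps s).map fun ω => (T s ω, W s ω)) β) atTop :=
    iInf_weightedMGF_le_liminf hν hℓcont hℓ1 hpos
  simp only [weightedMGF_map hℓcont.measurable (hTW _),
    weightedMGF_map hℓcont.measurable hTW₀] at key
  exact key
end

section
/- For every q ∈ (0,1), the function f : (0, ∞) → ℝ defined by f(λ) = −λ · log( q·exp(−1/λ) + (1−q) ) is strictly increasing on (0, ∞), satisfies f(λ) < q for every λ > 0, and f(λ) → q as λ → ∞. -/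
open Filter Real Set Topology

/-!
Write `K(s) = log (q eˢ + 1 - q)` for the cumulant generating function of a Bernoulli(`q`) variable,
so that `f(λ) = K(-1/λ) / (-1/λ)` is a chord slope of `K` through the origin. Strict concavity of
`x ↦ xᵃ` gives `K(a s) < a K(s)` for `0 < a < 1`, `s ≠ 0`, which makes these slopes monotone in `λ`;
strict convexity of `exp` (Jensen) gives `K(s) > q s`, i.e. `f < q`; and `K(0) = 0`, `K'(0) = q`
give the limit.
-/

noncomputable def bernoulliCGF (q s : ℝ) : ℝ := log (q * exp s + (1 - q))

namespace bernoulliCGF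

variable {q : ℝ}

@[simp]
lemma zero : bernoulliCGF q 0 = 0 := by simp [bernoulliCGF]

lemma mul_lt (hq0 : 0 < q) (hq1 : q < 1) {a s : ℝ} (ha0 : 0 < a) (ha1 : a < 1) (hs : s ≠ 0) :
    bernoulliCGF q (a * s) < a * bernoulliCGF q s := by
  have hexp_ne : exp s ≠ 1 := by simpa using hs
  have hconc := (strictConcaveOn_rpow ha0 ha1).2 (mem_Ici.2 (exp_pos s).le) (mem_Ici.2 zero_le_one)
    hexp_ne hq0 (sub_pos.2 hq1) (add_sub_cancel q 1)
  simp only [smul_eq_mul, mul_one, one_rpow, ← exp_mul] at hconc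
  rw [bernoulliCGF, bernoulliCGF, mul_comm a s, ← log_rpow (by nlinarith [exp_pos s])]
  exact log_lt_log (by nlinarith [exp_pos (s * a)]) hconc

lemma mul_lt_self (hq0 : 0 < q) (hq1 : q < 1) {s : ℝ} (hs : s ≠ 0) : q * s < bernoulliCGF q s := by
  have hjensen := strictConvexOn_exp.2 (mem_univ s) (mem_univ 0) hs hq0 (sub_pos.2 hq1)
    (add_sub_cancel q 1)
  simp only [smul_eq_mul, mul_zero, add_zero, exp_zero, mul_one] at hjensen
  rw [bernoulliCGF, ← log_exp (q * s)]
  exact log_lt_log (exp_pos _) hjensen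

lemma hasDerivAt_zero : HasDerivAt (bernoulliCGF q) q 0 := by
  have hmgf : HasDerivAt (fun s => q * exp s + (1 - q)) q 0 := by
    simpa using ((hasDerivAt_exp 0).const_mul q).add_const (1 - q)
  have hcgf := hmgf.log (by simp)
  rwa [exp_zero, mul_one, add_sub_cancel, div_one] at hcgf

lemma tendsto_div_nhdsNE_zero : Tendsto (fun s => bernoulliCGF q s / s) (𝓝[≠] 0) (𝓝 q) := by
  simpa [div_eq_inv_mul] using hasDerivAt_zero.tendsto_slope_zero

end bernoulliCGF

noncomputable def multiplierCertaintyEquivalent (q lam : ℝ) : ℝ := -lam * bernoulliCGF q (-1 / lam)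

namespace multiplierCertaintyEquivalent

variable {q : ℝ}

lemma eq_bernoulliCGF_div (lam : ℝ) :
    multiplierCertaintyEquivalent q lam = bernoulliCGF q (-1 / lam) / (-1 / lam) := by
  rw [multiplierCertaintyEquivalent, div_div_eq_mul_div, div_neg, div_one, neg_mul, mul_comm]

lemma strictMonoOn (hq0 : 0 < q) (hq1 : q < 1) :
    StrictMonoOn (multiplierCertaintyEquivalent q) (Ioi 0) := by
  intro l₁ (h₁ : 0 < l₁) l₂ (h₂ : 0 < l₂) hlt
  -- `-1/l₂` is the point `-1/l₁` scaled by `l₁/l₂ ∈ (0,1)`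
  have hscale : l₁ / l₂ * (-1 / l₁) = -1 / l₂ := by field_simp
  have key := bernoulliCGF.mul_lt hq0 hq1 (div_pos h₁ h₂) ((div_lt_one h₂).2 hlt)
    (div_ne_zero (neg_ne_zero.2 one_ne_zero) h₁.ne')
  calc multiplierCertaintyEquivalent q l₁
      = -l₂ * (l₁ / l₂ * bernoulliCGF q (-1 / l₁)) := by
        rw [multiplierCertaintyEquivalent]; field_simp
    _ < -l₂ * bernoulliCGF q (l₁ / l₂ * (-1 / l₁)) := mul_lt_mul_of_neg_left key (neg_neg_of_pos h₂)
    _ = multiplierCertaintyEquivalent q l₂ := by rw [hscale, multiplierCertaintyEquivalent]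

lemma lt_of_pos (hq0 : 0 < q) (hq1 : q < 1) {lam : ℝ} (hlam : 0 < lam) :
    multiplierCertaintyEquivalent q lam < q := by
  have key := bernoulliCGF.mul_lt_self hq0 hq1 (div_ne_zero (neg_ne_zero.2 one_ne_zero) hlam.ne')
  calc multiplierCertaintyEquivalent q lam = -lam * bernoulliCGF q (-1 / lam) := rfl
    _ < -lam * (q * (-1 / lam)) := mul_lt_mul_of_neg_left key (neg_neg_of_pos hlam)
    _ = q := by field_simp

lemma tendsto_atTop : Tendsto (multiplierCertaintyEquivalent q) atTop (𝓝 q) := by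
  have hinv : Tendsto (fun lam : ℝ => -1 / lam) atTop (𝓝[≠] 0) := by
    refine tendsto_nhdsWithin_of_tendsto_nhds_of_eventually_within _ ?_ ?_
    · simpa [neg_div] using (tendsto_inv_atTop_zero (𝕜 := ℝ)).neg
    · filter_upwards [eventually_gt_atTop 0] with lam hlam
      exact div_ne_zero (neg_ne_zero.2 one_ne_zero) hlam.ne'
  exact (bernoulliCGF.tendsto_div_nhdsNE_zero.comp hinv).congr fun lam =>
    (eq_bernoulliCGF_div lam).symm

end multiplierCertaintyEquivalent

/-- **Monotonicity of the multiplier certainty equivalent in `λ`.** For each `q ∈ (0,1)`,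
the map `λ ↦ −λ log(q e^{−1/λ} + (1−q))` is strictly increasing on `(0, ∞)`, is everywhere
strictly below `q`, and tends to `q` as `λ → ∞`. -/
theorem multiplier_certainty_equivalent_increasing
    (q : ℝ) (hq0 : 0 < q) (hq1 : q < 1) :
    StrictMonoOn (fun lam : ℝ => -lam * Real.log (q * Real.exp (-1 / lam) + (1 - q)))
        (Set.Ioi (0 : ℝ)) ∧
    (∀ lam : ℝ, 0 < lam →
      -lam * Real.log (q * Real.exp (-1 / lam) + (1 - q)) < q) ∧
    Tendsto (fun lam : ℝ => -lam * Real.log (q * Real.exp (-1 / lam) + (1 - q)))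
      atTop (nhds q) :=
  ⟨multiplierCertaintyEquivalent.strictMonoOn hq0 hq1,
    fun _ hlam => multiplierCertaintyEquivalent.lt_of_pos hq0 hq1 hlam,
    multiplierCertaintyEquivalent.tendsto_atTop⟩
end

section
/- Let μ be a probability measure on ℝ^p that is invariant under the map x ↦ −x, let K ∈ ℝ^{d×p}, let λ > 0, and define φ : ℝ^d → (0, +∞] by φ(a) = ∫ exp( ‖Kx + a‖² / λ ) dμ(x). Then φ(a) ≥ exp(‖a‖²/λ) · φ(0) for every a ∈ ℝ^d; in particular a = 0 is the unique minimizer of φ whenever φ(0) < ∞. -/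
open MeasureTheory Matrix

/-! By the parallelogram law `‖u‖² + ‖a‖²` is the mean of `‖u + a‖²` and `‖u - a‖²`, so convexity
of `exp` gives `2 e^{‖a‖²/λ} e^{‖u‖²/λ} ≤ e^{‖u + a‖²/λ} + e^{‖u - a‖²/λ}`. Take `u = Kx` and
integrate: since `μ` is symmetric and `x ↦ Kx` is odd, both terms on the right integrate to
`φ a`. Strictness follows because `e^{‖a‖²/λ} > 1` for `a ≠ 0` and `1 ≤ φ 0 < ∞`. -/

open Real in
theorem two_mul_exp_add_div_two_le (s t : ℝ) : 2 * exp ((s + t) / 2) ≤ exp s + exp t :=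
  calc 2 * exp ((s + t) / 2) = 2 * exp (s / 2) * exp (t / 2) := by
        rw [mul_assoc, ← exp_add, add_div]
    _ ≤ exp (s / 2) ^ 2 + exp (t / 2) ^ 2 := two_mul_le_add_sq _ _
    _ = exp s + exp t := by rw [sq, sq, ← exp_add, ← exp_add, add_halves, add_halves]

section ExpNormSq

open Real

variable {E : Type*} [NormedAddCommGroup E]

theorem one_le_lintegral_ofReal_exp_norm_sq_div {X : Type*} [MeasurableSpace X] {μ : Measure X}
    [IsProbabilityMeasure μ] (g : X → E) {lam : ℝ} (hlam : 0 ≤ lam) :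
    1 ≤ ∫⁻ x, ENNReal.ofReal (exp (‖g x‖ ^ 2 / lam)) ∂μ :=
  calc 1 = ∫⁻ _, 1 ∂μ := by simp
    _ ≤ _ := lintegral_mono fun _ ↦ ENNReal.one_le_ofReal.2 (one_le_exp (by positivity))

variable [InnerProductSpace ℝ E]

theorem two_mul_exp_norm_sq_div_mul_le (u a : E) (lam : ℝ) :
    2 * (exp (‖a‖ ^ 2 / lam) * exp (‖u‖ ^ 2 / lam)) ≤
      exp (‖u + a‖ ^ 2 / lam) + exp (‖u - a‖ ^ 2 / lam) := by
  have hmid : ‖a‖ ^ 2 / lam + ‖u‖ ^ 2 / lam = (‖u + a‖ ^ 2 / lam + ‖u - a‖ ^ 2 / lam) / 2 := by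
    rw [← add_div, ← add_div, parallelogram_law_with_norm ℝ]; ring
  rw [← exp_add, hmid]
  exact two_mul_exp_add_div_two_le _ _

variable [MeasurableSpace E] [BorelSpace E]
  {X : Type*} [MeasurableSpace X] [InvolutiveNeg X] [MeasurableNeg X]
  {μ : Measure X} [μ.IsNegInvariant] {f : X → E}

theorem ofReal_exp_mul_lintegral_le (hf : Measurable f) (hodd : ∀ x, f (-x) = -f x)
    (a : E) (lam : ℝ) :
    ENNReal.ofReal (exp (‖a‖ ^ 2 / lam)) * ∫⁻ x, ENNReal.ofReal (exp (‖f x‖ ^ 2 / lam)) ∂μ ≤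
      ∫⁻ x, ENNReal.ofReal (exp (‖f x + a‖ ^ 2 / lam)) ∂μ := by
  set I : E → ENNReal := fun b ↦ ∫⁻ x, ENNReal.ofReal (exp (‖f x + b‖ ^ 2 / lam)) ∂μ
  have hneg : I (-a) = I a := by
    simp only [I]
    rw [← lintegral_neg_eq_self]
    simp_rw [hodd, ← neg_add, norm_neg]
  suffices h2 : 2 * (ENNReal.ofReal (exp (‖a‖ ^ 2 / lam)) *
      ∫⁻ x, ENNReal.ofReal (exp (‖f x‖ ^ 2 / lam)) ∂μ) ≤ 2 * I a from
    (ENNReal.mul_le_mul_iff_right two_ne_zero ENNReal.ofNat_ne_top).1 h2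
  calc 2 * (ENNReal.ofReal (exp (‖a‖ ^ 2 / lam)) *
        ∫⁻ x, ENNReal.ofReal (exp (‖f x‖ ^ 2 / lam)) ∂μ)
      = ∫⁻ x, ENNReal.ofReal (2 * (exp (‖a‖ ^ 2 / lam) * exp (‖f x‖ ^ 2 / lam))) ∂μ := by
        simp_rw [ENNReal.ofReal_mul zero_le_two, ENNReal.ofReal_mul (exp_nonneg _),
          ENNReal.ofReal_ofNat, lintegral_const_mul' _ _ ENNReal.ofNat_ne_top,
          lintegral_const_mul' _ _ ENNReal.ofReal_ne_top]
    _ ≤ ∫⁻ x, (ENNReal.ofReal (exp (‖f x + a‖ ^ 2 / lam)) +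
          ENNReal.ofReal (exp (‖f x + -a‖ ^ 2 / lam))) ∂μ := lintegral_mono fun x ↦ by
        rw [← ENNReal.ofReal_add (exp_nonneg _) (exp_nonneg _), ← sub_eq_add_neg]
        exact ENNReal.ofReal_le_ofReal (two_mul_exp_norm_sq_div_mul_le _ _ _)
    _ = I a + I (-a) := lintegral_add_left (by fun_prop) _
    _ = 2 * I a := by rw [hneg, two_mul]

end ExpNormSq

/-- **Symmetry lower bound for the exponentiated quadratic risk.** Let `μ` be a probability
measure on `ℝ^p` invariant under `x ↦ −x`, `K ∈ ℝ^{d×p}`, `λ > 0`, and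
`φ(a) = ∫ exp(‖Kx + a‖²/λ) dμ(x) ∈ (0, +∞]`.  Then `φ(a) ≥ exp(‖a‖²/λ) φ(0)` for every
`a`; in particular `a = 0` is the unique minimizer of `φ` whenever `φ(0) < ∞`. -/
theorem exp_quadratic_symmetric_minimizer
    (p d : ℕ) (μ : Measure (Fin p → ℝ)) [IsProbabilityMeasure μ]
    (hsymm : μ.map (fun x => -x) = μ)
    (K : Matrix (Fin d) (Fin p) ℝ) (lam : ℝ) (hlam : 0 < lam)
    (φ : (Fin d → ℝ) → ENNReal)
    (hφ : ∀ a, φ a = ∫⁻ x, ENNReal.ofReal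
        (Real.exp ((∑ i, (K.mulVec x i + a i) ^ 2) / lam)) ∂μ) :
    (∀ a : Fin d → ℝ, ENNReal.ofReal (Real.exp ((∑ i, (a i) ^ 2) / lam)) * φ 0 ≤ φ a)
    ∧ (φ 0 < ⊤ → ∀ a : Fin d → ℝ, a ≠ 0 → φ 0 < φ a) := by
  have : μ.IsNegInvariant := ⟨hsymm⟩
  set f : (Fin p → ℝ) → EuclideanSpace ℝ (Fin d) := fun x ↦ WithLp.toLp 2 (K *ᵥ x)
  have hsum (v : Fin d → ℝ) : ∑ i, v i ^ 2 = ‖WithLp.toLp 2 v‖ ^ 2 :=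
    (EuclideanSpace.real_norm_sq_eq _).symm
  have hφ' (a : Fin d → ℝ) :
      φ a = ∫⁻ x, ENNReal.ofReal (Real.exp (‖f x + WithLp.toLp 2 a‖ ^ 2 / lam)) ∂μ := by
    simp_rw [hφ, f, ← WithLp.toLp_add, ← hsum, Pi.add_apply]
  have hmain (a : Fin d → ℝ) :
      ENNReal.ofReal (Real.exp ((∑ i, (a i) ^ 2) / lam)) * φ 0 ≤ φ a := by
    rw [hsum, hφ' 0, hφ' a]
    simpa using ofReal_exp_mul_lintegral_le (by fun_prop) (fun x ↦ by simp [f, mulVec_neg]) _ lam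
  refine ⟨hmain, fun hfin a ha ↦ ?_⟩
  have hφ0 : φ 0 ≠ 0 := by
    rw [hφ' 0]
    exact (zero_lt_one.trans_le (one_le_lintegral_ofReal_exp_norm_sq_div _ hlam.le)).ne'
  have hgrowth : 1 < ENNReal.ofReal (Real.exp ((∑ i, (a i) ^ 2) / lam)) := by
    rw [hsum]
    have hpos : 0 < ‖WithLp.toLp 2 a‖ := norm_pos_iff.2 (by simpa using ha)
    exact ENNReal.one_lt_ofReal.2 (Real.one_lt_exp_iff.2 (by positivity))
  calc φ 0 = 1 * φ 0 := (one_mul _).symm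
    _ < _ * φ 0 := (ENNReal.mul_lt_mul_iff_left hφ0 hfin.ne).2 hgrowth
    _ ≤ φ a := hmain a
end
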